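/- arXiv:math/0610882 — 11 statements merged into one kernel-verified Lean document; each statement's English description precedes it below -/
import Mathlib

section
/- Let Λ : P_{2n} → ℝ be given by Λ(p) = Σ_{i=1}^m α_i p(w_i), where w_1,...,w_m are distinct points of ℝ^d and α_1,...,α_m ∈ ℝ. Suppose the associated moment matrix M(n) (defined by ⟨M(n) p̂, q̂⟩ = Λ(pq) for p,q ∈ P_n) has rank m. Then Λ is square positive (i.e., Λ(p²) ≥ 0 for all p ∈ P_n) if and only if α_i > 0 for all i = 1,...,m. -/
open MvPolynomial Module

/-- evaluation at a point as a linear functional on `restrictTotalDegree`. -/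
noncomputable def evFun (d n : ℕ) (v : Fin d → ℝ) :
    MvPolynomial.restrictTotalDegree (Fin d) ℝ n →ₗ[ℝ] ℝ :=
  (MvPolynomial.aeval v).toLinearMap.comp (MvPolynomial.restrictTotalDegree (Fin d) ℝ n).subtype

lemma evFun_apply (d n : ℕ) (v : Fin d → ℝ)
    (p : MvPolynomial.restrictTotalDegree (Fin d) ℝ n) :
    evFun d n v p = MvPolynomial.eval v (p : MvPolynomial (Fin d) ℝ) :=
  DFunLike.congr_fun (coe_aeval_eq_eval (f := v)) _

/-- Lemma 2.4: for `Λ(p) = Σ αᵢ p(wᵢ)` with distinct points and moment matrix of rank `m`,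
square positivity of `Λ` is equivalent to positivity of all densities `αᵢ`. -/
theorem stmt1 (d n m : ℕ) (w : Fin m → (Fin d → ℝ)) (hw : Function.Injective w)
    (α : Fin m → ℝ) (Λ : MvPolynomial (Fin d) ℝ → ℝ)
    (hΛ : ∀ p : MvPolynomial (Fin d) ℝ, Λ p = ∑ i, α i * MvPolynomial.eval (w i) p)
    (T : MvPolynomial.restrictTotalDegree (Fin d) ℝ n →ₗ[ℝ]
      (MvPolynomial.restrictTotalDegree (Fin d) ℝ n →ₗ[ℝ] ℝ))
    (hT : ∀ p q : MvPolynomial.restrictTotalDegree (Fin d) ℝ n,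
      T p q = Λ ((p : MvPolynomial (Fin d) ℝ) * (q : MvPolynomial (Fin d) ℝ)))
    (hrank : Module.finrank ℝ (LinearMap.range T) = m) :
    (∀ p : MvPolynomial.restrictTotalDegree (Fin d) ℝ n,
        0 ≤ Λ ((p : MvPolynomial (Fin d) ℝ) * (p : MvPolynomial (Fin d) ℝ))) ↔
    ∀ i, 0 < α i := by
  classical
  constructor
  · intro hpos i
    set ev : Fin m → (MvPolynomial.restrictTotalDegree (Fin d) ℝ n →ₗ[ℝ] ℝ) :=
      fun j => evFun d n (w j) with hev
    set Φ : MvPolynomial.restrictTotalDegree (Fin d) ℝ n →ₗ[ℝ] (Fin m → ℝ) :=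
      LinearMap.pi ev with hΦ
    set G : (Fin m → ℝ) →ₗ[ℝ]
        (MvPolynomial.restrictTotalDegree (Fin d) ℝ n →ₗ[ℝ] ℝ) :=
      ∑ j, α j • LinearMap.smulRight (LinearMap.proj j) (ev j) with hGdef
    have hG : ∀ v, G v = ∑ j, (α j * v j) • ev j := by
      intro v
      rw [hGdef]
      simp only [LinearMap.sum_apply, LinearMap.smul_apply, LinearMap.smulRight_apply,
        LinearMap.proj_apply, smul_smul]
    have hTG : T = G.comp Φ := by
      ext p q
      rw [hT, hΛ]
      simp only [LinearMap.comp_apply, hG, LinearMap.sum_apply, LinearMap.smul_apply,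
        hΦ, LinearMap.pi_apply, hev, evFun_apply, smul_eq_mul, map_mul]
      exact Finset.sum_congr rfl fun j _ => by ring
    have hrangeTG : LinearMap.range T ≤ LinearMap.range G := by
      rw [hTG]; exact LinearMap.range_comp_le_range _ _
    -- surjectivity of Φ
    have h1 : m ≤ finrank ℝ (LinearMap.range Φ) := by
      calc m = finrank ℝ (LinearMap.range T) := hrank.symm
        _ = finrank ℝ ((LinearMap.range Φ).map G) := by rw [hTG, LinearMap.range_comp]
        _ ≤ finrank ℝ (LinearMap.range Φ) := Submodule.finrank_map_le _ _
    have hfr : finrank ℝ (Fin m → ℝ) = m := by simp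
    have h2 : LinearMap.range Φ = ⊤ := by
      apply Submodule.eq_top_of_finrank_eq
      have hle' := Submodule.finrank_le (LinearMap.range Φ)
      rw [hfr] at hle'
      rw [hfr]
      exact le_antisymm hle' h1
    obtain ⟨p, hp⟩ := LinearMap.range_eq_top.mp h2 (Pi.single i 1)
    have hpj : ∀ j, MvPolynomial.eval (w j) (p : MvPolynomial (Fin d) ℝ) = (Pi.single i 1 : Fin m → ℝ) j := by
      intro j
      rw [← evFun_apply d n (w j) p]
      have := congrFun hp j
      simpa [hΦ, LinearMap.pi_apply, hev] using this
    have hval : Λ ((p : MvPolynomial (Fin d) ℝ) * (p : MvPolynomial (Fin d) ℝ)) = α i := by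
      rw [hΛ]
      simp only [map_mul, hpj]
      rw [Finset.sum_eq_single i]
      · simp
      · intro j _ hj
        simp [Pi.single_apply, hj]
      · simp
    have hle : 0 ≤ α i := hval ▸ hpos p
    have hne : α i ≠ 0 := by
      intro h0
      have hrG : LinearMap.range G ≤
          Submodule.span ℝ (Set.range fun j : {j : Fin m // j ≠ i} => ev j) := by
        rintro f ⟨v, rfl⟩
        rw [hG]
        apply Submodule.sum_mem
        intro j _
        by_cases hj : j = i
        · subst hj; rw [h0]; simp
        · exact Submodule.smul_mem _ _ (Submodule.subset_span ⟨⟨j, hj⟩, rfl⟩)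
      have hcard : Fintype.card {j : Fin m // j ≠ i} < m := by
        have := Fintype.card_subtype_lt (p := fun j : Fin m => j ≠ i) (x := i) (by simp)
        simpa using this
      have : m ≤ Fintype.card {j : Fin m // j ≠ i} := by
        calc m = finrank ℝ (LinearMap.range T) := hrank.symm
          _ ≤ finrank ℝ (Submodule.span ℝ
              (Set.range fun j : {j : Fin m // j ≠ i} => ev j)) :=
            Submodule.finrank_mono (le_trans hrangeTG hrG)
          _ ≤ Fintype.card {j : Fin m // j ≠ i} := finrank_range_le_card _
      omega
    exact lt_of_le_of_ne hle (Ne.symm hne)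
  · intro hα p
    rw [hΛ]
    apply Finset.sum_nonneg
    intro i _
    rw [map_mul]
    exact mul_nonneg (hα i).le (mul_self_nonneg _)
end

section
/- Let Λ : P_{2n} → ℝ be given by Λ(p) = Σ_{i=1}^m α_i p(w_i) with distinct w_1,...,w_m ∈ ℝ^d and α_i ∈ ℝ, and suppose the associated moment matrix M(n) has rank m. Then there exist polynomials ℓ_1,...,ℓ_m ∈ P_n with ℓ_i(w_j) = δ_{ij} for all 1 ≤ i,j ≤ m. -/
open MvPolynomial

/-- Existence of Lagrange-type polynomials `ℓᵢ ∈ P_n` with `ℓᵢ(w_j) = δ_{ij}`,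
when the moment matrix of `Λ(p) = Σ αᵢ p(wᵢ)` has rank `m`. -/
theorem stmt2 (d n m : ℕ) (w : Fin m → (Fin d → ℝ)) (hw : Function.Injective w)
    (α : Fin m → ℝ) (Λ : MvPolynomial (Fin d) ℝ → ℝ)
    (hΛ : ∀ p : MvPolynomial (Fin d) ℝ, Λ p = ∑ i, α i * MvPolynomial.eval (w i) p)
    (T : MvPolynomial.restrictTotalDegree (Fin d) ℝ n →ₗ[ℝ]
      (MvPolynomial.restrictTotalDegree (Fin d) ℝ n →ₗ[ℝ] ℝ))
    (hT : ∀ p q : MvPolynomial.restrictTotalDegree (Fin d) ℝ n,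
      T p q = Λ ((p : MvPolynomial (Fin d) ℝ) * (q : MvPolynomial (Fin d) ℝ)))
    (hrank : Module.finrank ℝ (LinearMap.range T) = m) :
    ∃ ℓ : Fin m → MvPolynomial.restrictTotalDegree (Fin d) ℝ n,
      ∀ i j, MvPolynomial.eval (w j) ((ℓ i : MvPolynomial (Fin d) ℝ)) =
        if i = j then 1 else 0 := by
  classical
  -- evaluation map
  let P := MvPolynomial.restrictTotalDegree (Fin d) ℝ n
  let E : P →ₗ[ℝ] (Fin m → ℝ) :=
    { toFun := fun p j => MvPolynomial.eval (w j) (p : MvPolynomial (Fin d) ℝ)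
      map_add' := by intro p q; funext j; simp
      map_smul' := by intro c p; funext j; simp [MvPolynomial.smul_eval] }
  let B : (Fin m → ℝ) →ₗ[ℝ] (P →ₗ[ℝ] ℝ) :=
    { toFun := fun v =>
        { toFun := fun q => ∑ i, α i * v i * MvPolynomial.eval (w i) (q : MvPolynomial (Fin d) ℝ)
          map_add' := by intro p q; simp [mul_add, Finset.sum_add_distrib]
          map_smul' := by
            intro c p; simp only [Finset.mul_sum, SetLike.val_smul, MvPolynomial.smul_eval, smul_eq_mul,
              RingHom.id_apply]
            exact Finset.sum_congr rfl fun i _ => by ring }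
      map_add' := by
        intro u v; ext q; simp [add_mul, mul_add, Finset.sum_add_distrib]
      map_smul' := by
        intro c v; ext q
        simp only [LinearMap.coe_mk, AddHom.coe_mk, Pi.smul_apply, smul_eq_mul,
          RingHom.id_apply, LinearMap.smul_apply, Finset.mul_sum]
        exact Finset.sum_congr rfl fun i _ => by ring }
  have hTBE : T = B.comp E := by
    ext p q
    rw [hT p q, hΛ]
    simp [B, E, mul_assoc]
  have h1 : LinearMap.range T = Submodule.map B (LinearMap.range E) := by
    rw [hTBE, LinearMap.range_comp]
  have h2 : Module.finrank ℝ (LinearMap.range E) = m := by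
    have hle1 : Module.finrank ℝ (LinearMap.range T) ≤
        Module.finrank ℝ (LinearMap.range E) := by
      rw [h1]
      exact Submodule.finrank_map_le B (LinearMap.range E)
    have hle2 : Module.finrank ℝ (LinearMap.range E) ≤ m := by
      have := Submodule.finrank_le (LinearMap.range E)
      simpa using this
    omega
  have hEtop : LinearMap.range E = ⊤ := by
    apply Submodule.eq_top_of_finrank_eq
    rw [h2]; simp
  have hsurj : Function.Surjective E := LinearMap.range_eq_top.mp hEtop
  choose ℓ hℓ using fun i => hsurj (Pi.single i 1)
  refine ⟨ℓ, fun i j => ?_⟩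
  have := congrFun (hℓ i) j
  simp only [E, LinearMap.coe_mk, AddHom.coe_mk] at this
  rw [this, Pi.single_apply]
  simp [eq_comm]
end

section
/- Suppose the d-dimensional truncated moment sequence β^{(2n)} is consistent, i.e., every polynomial p ∈ P_{2n} vanishing on the algebraic variety V of β satisfies Λ_β(p) = 0. Then the kernel of the moment matrix M(n), viewed as polynomials, equals the set of polynomials of degree at most n vanishing identically on V: {p ∈ P_n : M(n) p̂ = 0} = I(V) ∩ P_n. -/
open MvPolynomial

/-- Lemma 2.2: if `β` is consistent, the kernel of the moment matrix `M(n)`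
(encoded via the Riesz functional: `M(n) p̂ = 0` iff `Λ(pq) = 0` for all `q ∈ P_n`)
coincides with the polynomials of degree at most `n` vanishing on the variety `V`. -/
theorem stmt4 (d n : ℕ) (Λ : MvPolynomial (Fin d) ℝ →ₗ[ℝ] ℝ)
    (V : Set (Fin d → ℝ))
    (hV : V = {x | ∀ p : MvPolynomial (Fin d) ℝ, p.totalDegree ≤ n →
      (∀ q : MvPolynomial (Fin d) ℝ, q.totalDegree ≤ n → Λ (p * q) = 0) →
      MvPolynomial.eval x p = 0})
    (hcons : ∀ p : MvPolynomial (Fin d) ℝ, p.totalDegree ≤ 2 * n →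
      (∀ x ∈ V, MvPolynomial.eval x p = 0) → Λ p = 0) :
    ∀ p : MvPolynomial (Fin d) ℝ, p.totalDegree ≤ n →
      ((∀ q : MvPolynomial (Fin d) ℝ, q.totalDegree ≤ n → Λ (p * q) = 0) ↔
        ∀ x ∈ V, MvPolynomial.eval x p = 0) := by
  intro p hp
  constructor
  · intro hker x hx
    rw [hV] at hx
    exact hx p hp hker
  · intro hvan q hq
    apply hcons
    · calc (p * q).totalDegree ≤ p.totalDegree + q.totalDegree := totalDegree_mul p q
        _ ≤ n + n := add_le_add hp hq
        _ = 2 * n := (two_mul n).symm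
    · intro x hx
      rw [map_mul, hvan x hx, zero_mul]
end

section
/- If β^{(2n)} is consistent (every p ∈ P_{2n} vanishing on the variety V of M(n) satisfies Λ_β(p) = 0), then M(n) is recursively generated: whenever p, q, pq ∈ P_n and M(n) p̂ = 0, it follows that M(n) (pq)^ = 0. -/
open MvPolynomial

/-- Proposition 3.1: consistency implies that `M(n)` is recursively generated. -/
theorem stmt5 (d n : ℕ) (Λ : MvPolynomial (Fin d) ℝ →ₗ[ℝ] ℝ)
    (V : Set (Fin d → ℝ))
    (hV : V = {x | ∀ p : MvPolynomial (Fin d) ℝ, p.totalDegree ≤ n →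
      (∀ q : MvPolynomial (Fin d) ℝ, q.totalDegree ≤ n → Λ (p * q) = 0) →
      MvPolynomial.eval x p = 0})
    (hcons : ∀ p : MvPolynomial (Fin d) ℝ, p.totalDegree ≤ 2 * n →
      (∀ x ∈ V, MvPolynomial.eval x p = 0) → Λ p = 0) :
    ∀ p q : MvPolynomial (Fin d) ℝ, p.totalDegree ≤ n → q.totalDegree ≤ n →
      (p * q).totalDegree ≤ n →
      (∀ s : MvPolynomial (Fin d) ℝ, s.totalDegree ≤ n → Λ (p * s) = 0) →
      ∀ s : MvPolynomial (Fin d) ℝ, s.totalDegree ≤ n → Λ (p * q * s) = 0 := by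
  intro p q hp hq hpq hker s hs
  apply hcons
  · calc (p * q * s).totalDegree ≤ (p * q).totalDegree + s.totalDegree :=
        totalDegree_mul _ _
      _ ≤ n + n := add_le_add hpq hs
      _ = 2 * n := (two_mul n).symm
  · intro x hx
    have hpx : MvPolynomial.eval x p = 0 := by
      rw [hV] at hx
      exact hx p hp hker
    simp [hpx]
end

section
/- If β^{(2n)} satisfies property (*): for all p ∈ P_n and q with pq ∈ P_{2n} and M(n) p̂ = 0 one has Λ_β(pq) = 0, then M(n) is recursively generated: p, q, pq ∈ P_n and M(n) p̂ = 0 imply M(n) (pq)^ = 0. -/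
open MvPolynomial

/-- Proposition 3.1(ii): property (*) implies that `M(n)` is recursively generated. -/
theorem stmt6 (d n : ℕ) (Λ : MvPolynomial (Fin d) ℝ →ₗ[ℝ] ℝ)
    (hstar : ∀ p q : MvPolynomial (Fin d) ℝ, p.totalDegree ≤ n →
      (p * q).totalDegree ≤ 2 * n →
      (∀ s : MvPolynomial (Fin d) ℝ, s.totalDegree ≤ n → Λ (p * s) = 0) →
      Λ (p * q) = 0) :
    ∀ p q : MvPolynomial (Fin d) ℝ, p.totalDegree ≤ n → q.totalDegree ≤ n →
      (p * q).totalDegree ≤ n →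
      (∀ s : MvPolynomial (Fin d) ℝ, s.totalDegree ≤ n → Λ (p * s) = 0) →
      ∀ s : MvPolynomial (Fin d) ℝ, s.totalDegree ≤ n → Λ (p * q * s) = 0 := by
  intro p q hp hq hpq hker s hs
  rw [mul_assoc]
  apply hstar p (q * s) hp
  · calc (p * (q * s)).totalDegree = (p * q * s).totalDegree := by rw [mul_assoc]
      _ ≤ (p * q).totalDegree + s.totalDegree := totalDegree_mul _ _
      _ ≤ n + n := add_le_add hpq hs
      _ = 2 * n := (two_mul n).symm
  · exact hker
end

section
/- Let β^{(2n)} be extremal, i.e., r := rank M(n) equals v := card V where V = {w_1,...,w_r} is the (finite) variety of M(n), and let B = {p_1(X),...,p_r(X)} be a basis of the column space of M(n) with p_i ∈ P_n. Then the following are equivalent: (i) every p ∈ P_n vanishing identically on V satisfies M(n) p̂ = 0; (ii) for every column-space basis B, the r × r matrix V_B = (p_i(w_j)) is invertible; (iii) for some column-space basis B, the matrix V_B is invertible. -/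
/-!
For extremal `β`, the evaluation map `E : p ↦ (p(w_j))_j` on `P_n` vanishes on `ker M(n)`
(the `w_j` lie in `V`), so `E` factors through the column space, a space of the same dimension
`r` as the target `ℝ^r`. Condition (i) says `ker E = ker M(n)`, i.e. that this factored map is
injective, hence bijective; and the rows `E(p_i)` of `V_B` are its values on the basis `B`.
-/

open MvPolynomial Module

theorem LinearIndependent.map_of_ker_le {R M N N' ι : Type*} [Ring R] [AddCommGroup M]
    [Module R M] [AddCommGroup N] [Module R N] [AddCommGroup N'] [Module R N']
    {T : M →ₗ[R] N} {E : M →ₗ[R] N'} {p : ι → M} (hp : LinearIndependent R fun i => T (p i))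
    (hker : LinearMap.ker E ≤ LinearMap.ker T) : LinearIndependent R fun i => E (p i) := by
  rw [linearIndependent_iff'] at hp ⊢
  intro s g hg
  refine hp s g ?_
  have hE : ∑ i ∈ s, g i • p i ∈ LinearMap.ker E := by simpa [map_sum] using hg
  simpa [map_sum] using hker hE

theorem Matrix.det_ne_zero_iff_linearIndependent_rows {K m : Type*} [Field K] [Fintype m]
    [DecidableEq m] {A : Matrix m m K} : A.det ≠ 0 ↔ LinearIndependent K A.row := by
  rw [linearIndependent_rows_iff_isUnit, isUnit_iff_isUnit_det, isUnit_iff_ne_zero]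

namespace LinearMap

variable {K M N N' ι : Type*} [Field K] [AddCommGroup M] [Module K M] [AddCommGroup N]
  [Module K N] [AddCommGroup N'] [Module K N'] [Fintype ι]

theorem range_eq_top_of_linearIndependent [FiniteDimensional K N'] {E : M →ₗ[K] N'} {p : ι → M}
    (hp : LinearIndependent K fun i => E (p i)) (hcard : Fintype.card ι = finrank K N') :
    range E = ⊤ := by
  rw [eq_top_iff, ← hp.span_eq_top_of_card_eq_finrank' hcard, Submodule.span_le]
  rintro _ ⟨i, rfl⟩
  exact mem_range_self E (p i)

theorem ker_eq_of_ker_le_of_finrank_range_eq [FiniteDimensional K M] {T : M →ₗ[K] N}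
    {E : M →ₗ[K] N'} (hle : ker T ≤ ker E) (h : finrank K (range E) = finrank K (range T)) :
    ker T = ker E :=
  Submodule.eq_of_le_of_finrank_le hle <| by
    have hT := finrank_range_add_finrank_ker T
    have hE := finrank_range_add_finrank_ker E
    omega

theorem exists_linearIndependent_span_eq_range [FiniteDimensional K M] (T : M →ₗ[K] N)
    (h : finrank K (range T) = Fintype.card ι) :
    ∃ p : ι → M, LinearIndependent K (fun i => T (p i)) ∧
      Submodule.span K (Set.range fun i => T (p i)) = range T := by
  let b : Basis ι K (range T) := (finBasisOfFinrankEq K _ h).reindex (Fintype.equivFin ι).symm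
  obtain ⟨p, hp⟩ : ∃ p : ι → M, ∀ i, T.rangeRestrict (p i) = b i :=
    ⟨fun i => Function.surjInv T.surjective_rangeRestrict (b i),
      fun i => Function.surjInv_eq _ _⟩
  have hTp : (fun i => T (p i)) = (range T).subtype ∘ b :=
    funext fun i => congrArg Subtype.val (hp i)
  refine ⟨p, ?_, ?_⟩
  · rw [hTp]
    exact b.linearIndependent.map' _ (Submodule.ker_subtype _)
  · rw [hTp, Set.range_comp, ← Submodule.map_span, b.span_eq, Submodule.map_top,
      Submodule.range_subtype]

variable [DecidableEq ι]

theorem tfae_ker_le_det_ne_zero [FiniteDimensional K M] {T : M →ₗ[K] N} {E : M →ₗ[K] ι → K}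
    (hTE : ker T ≤ ker E) (hrank : finrank K (range T) = Fintype.card ι) :
    List.TFAE [ker E ≤ ker T,
      ∀ p : ι → M, LinearIndependent K (fun i => T (p i)) ∧
          Submodule.span K (Set.range fun i => T (p i)) = range T →
        (Matrix.of fun i j => E (p i) j).det ≠ 0,
      ∃ p : ι → M, (LinearIndependent K (fun i => T (p i)) ∧
          Submodule.span K (Set.range fun i => T (p i)) = range T) ∧
        (Matrix.of fun i j => E (p i) j).det ≠ 0] := by
  tfae_have 1 → 2 := fun hET p hp =>
    Matrix.det_ne_zero_iff_linearIndependent_rows.mpr (hp.1.map_of_ker_le hET)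
  tfae_have 2 → 3 := fun h =>
    (T.exists_linearIndependent_span_eq_range hrank).imp fun p hp => ⟨hp, h p hp⟩
  tfae_have 3 → 1 := by
    rintro ⟨p, -, hdet⟩
    have hE : range E = ⊤ := range_eq_top_of_linearIndependent
      (Matrix.det_ne_zero_iff_linearIndependent_rows.mp hdet) (by simp)
    refine (ker_eq_of_ker_le_of_finrank_range_eq hTE ?_).ge
    rw [hE, finrank_top, hrank, finrank_fintype_fun_eq_card]
  tfae_finish

end LinearMap

noncomputable def MvPolynomial.evalAt {σ R ι : Type*} [CommSemiring R] (w : ι → σ → R) :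
    MvPolynomial σ R →ₗ[R] ι → R :=
  LinearMap.pi fun j => (aeval (w j)).toLinearMap

theorem stmt7_general (d n r : ℕ)
    (T : MvPolynomial.restrictTotalDegree (Fin d) ℝ n →ₗ[ℝ]
      (MvPolynomial.restrictTotalDegree (Fin d) ℝ n →ₗ[ℝ] ℝ))
    (w : Fin r → (Fin d → ℝ))
    (V : Set (Fin d → ℝ)) (hVw : V = Set.range w)
    (hV : V = {x | ∀ p : MvPolynomial.restrictTotalDegree (Fin d) ℝ n,
      T p = 0 → MvPolynomial.eval x (p : MvPolynomial (Fin d) ℝ) = 0})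
    (hrank : Module.finrank ℝ (LinearMap.range T) = r) :
    ((∀ p : MvPolynomial.restrictTotalDegree (Fin d) ℝ n,
        (∀ x ∈ V, MvPolynomial.eval x (p : MvPolynomial (Fin d) ℝ) = 0) → T p = 0) ↔
      (∀ p : Fin r → MvPolynomial.restrictTotalDegree (Fin d) ℝ n,
        (LinearIndependent ℝ (fun i => T (p i)) ∧
          Submodule.span ℝ (Set.range fun i => T (p i)) = LinearMap.range T) →
        (Matrix.of fun i j =>
          MvPolynomial.eval (w j) ((p i : MvPolynomial (Fin d) ℝ))).det ≠ 0)) ∧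
    ((∀ p : Fin r → MvPolynomial.restrictTotalDegree (Fin d) ℝ n,
        (LinearIndependent ℝ (fun i => T (p i)) ∧
          Submodule.span ℝ (Set.range fun i => T (p i)) = LinearMap.range T) →
        (Matrix.of fun i j =>
          MvPolynomial.eval (w j) ((p i : MvPolynomial (Fin d) ℝ))).det ≠ 0) ↔
      (∃ p : Fin r → MvPolynomial.restrictTotalDegree (Fin d) ℝ n,
        (LinearIndependent ℝ (fun i => T (p i)) ∧
          Submodule.span ℝ (Set.range fun i => T (p i)) = LinearMap.range T) ∧
        (Matrix.of fun i j =>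
          MvPolynomial.eval (w j) ((p i : MvPolynomial (Fin d) ℝ))).det ≠ 0)) := by
  let E := evalAt w ∘ₗ (restrictTotalDegree (Fin d) ℝ n).subtype
  have hTE : LinearMap.ker T ≤ LinearMap.ker E := fun p hp => funext fun j => by
    have hwj : w j ∈ V := hVw ▸ Set.mem_range_self j
    rw [hV] at hwj
    exact hwj p hp
  have hvanish : ∀ p : restrictTotalDegree (Fin d) ℝ n,
      (∀ x ∈ V, eval x (p : MvPolynomial (Fin d) ℝ) = 0) ↔ p ∈ LinearMap.ker E := by
    intro p
    rw [hVw, Set.forall_mem_range, LinearMap.mem_ker, _root_.funext_iff]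
    rfl
  have htfae := LinearMap.tfae_ker_le_det_ne_zero hTE (hrank.trans (Fintype.card_fin r).symm)
  exact ⟨(forall_congr' fun p => imp_congr_left (hvanish p)).trans (htfae.out 0 1),
    htfae.out 1 2⟩

/-- Lemma 3.1: for extremal `β` (rank `M(n)` = card `V` = `r`), injectivity of the
restriction map `p(X) ↦ p|_V` is equivalent to invertibility of `V_B = (pᵢ(w_j))`
for every (equivalently, for some) column-space basis `B = {p₁(X),…,p_r(X)}`. -/
theorem stmt7 (d n r : ℕ) (Λ : MvPolynomial (Fin d) ℝ →ₗ[ℝ] ℝ)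
    (T : MvPolynomial.restrictTotalDegree (Fin d) ℝ n →ₗ[ℝ]
      (MvPolynomial.restrictTotalDegree (Fin d) ℝ n →ₗ[ℝ] ℝ))
    (hT : ∀ p q : MvPolynomial.restrictTotalDegree (Fin d) ℝ n,
      T p q = Λ ((p : MvPolynomial (Fin d) ℝ) * (q : MvPolynomial (Fin d) ℝ)))
    (w : Fin r → (Fin d → ℝ)) (hw : Function.Injective w)
    (V : Set (Fin d → ℝ)) (hVw : V = Set.range w)
    (hV : V = {x | ∀ p : MvPolynomial.restrictTotalDegree (Fin d) ℝ n,
      T p = 0 → MvPolynomial.eval x (p : MvPolynomial (Fin d) ℝ) = 0})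
    (hrank : Module.finrank ℝ (LinearMap.range T) = r) :
    ((∀ p : MvPolynomial.restrictTotalDegree (Fin d) ℝ n,
        (∀ x ∈ V, MvPolynomial.eval x (p : MvPolynomial (Fin d) ℝ) = 0) → T p = 0) ↔
      (∀ p : Fin r → MvPolynomial.restrictTotalDegree (Fin d) ℝ n,
        (LinearIndependent ℝ (fun i => T (p i)) ∧
          Submodule.span ℝ (Set.range fun i => T (p i)) = LinearMap.range T) →
        (Matrix.of fun i j =>
          MvPolynomial.eval (w j) ((p i : MvPolynomial (Fin d) ℝ))).det ≠ 0)) ∧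
    ((∀ p : Fin r → MvPolynomial.restrictTotalDegree (Fin d) ℝ n,
        (LinearIndependent ℝ (fun i => T (p i)) ∧
          Submodule.span ℝ (Set.range fun i => T (p i)) = LinearMap.range T) →
        (Matrix.of fun i j =>
          MvPolynomial.eval (w j) ((p i : MvPolynomial (Fin d) ℝ))).det ≠ 0) ↔
      (∃ p : Fin r → MvPolynomial.restrictTotalDegree (Fin d) ℝ n,
        (LinearIndependent ℝ (fun i => T (p i)) ∧
          Submodule.span ℝ (Set.range fun i => T (p i)) = LinearMap.range T) ∧
        (Matrix.of fun i j =>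
          MvPolynomial.eval (w j) ((p i : MvPolynomial (Fin d) ℝ))).det ≠ 0)) :=
  stmt7_general d n r T w V hVw hV hrank
end

section
/- Let β^{(2n)} be an extremal d-dimensional truncated moment sequence (rank M(n) = card V = r). If M(n) is positive semidefinite and β is consistent, then β has a unique representing measure, namely the r-atomic measure μ = Σ_{k=1}^r ρ_k δ_{w_k} supported on V = {w_1,...,w_r}, with all densities ρ_k > 0. -/
open MvPolynomial MeasureTheory

/-- `μ` is a representing measure for the truncated moment sequence with Riesz
functional `Λ` (degree `2n`): every monomial (equivalently polynomial) of degree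
at most `2n` is integrable with integral the prescribed moment. -/
def IsRepresenting (d n : ℕ) (Λ : MvPolynomial (Fin d) ℝ →ₗ[ℝ] ℝ)
    (μ : Measure (Fin d → ℝ)) : Prop :=
  ∀ p : MvPolynomial (Fin d) ℝ, p.totalDegree ≤ 2 * n →
    Integrable (fun x => MvPolynomial.eval x p) μ ∧
    (∫ x, MvPolynomial.eval x p ∂μ) = Λ p

/-!
Let `T p q = Λ (p * q)` on polynomials of degree `≤ n`. Since `T` is positive semidefinite,
Cauchy–Schwarz gives `ker T = {p | Λ (p * p) = 0}`, and consistency identifies this with the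
polynomials vanishing on `V = {w₁, …, w_r}`. So evaluation at the `w_k` has the same kernel as
`T`, hence rank `r`, and is onto `ℝ^r`: there are Lagrange interpolants `q_k` of degree `≤ n`.
Consistency applied to `p - ∑ p(w_k) q_k²` gives `Λ p = ∑ ρ_k p(w_k)` with `ρ_k = Λ (q_k²) > 0`.
Conversely, a representing measure integrates `p²` to `0` for `p ∈ ker T`, so it is carried by
`V`, and its mass at `w_k` is `∫ q_k² dμ = ρ_k`.
-/

open Function Set

namespace MeasureTheory.Measure

variable {ι α : Type*} [Fintype ι] [MeasurableSpace α] [MeasurableSingletonClass α]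

theorem eq_sum_smul_dirac_of_ae_mem_range {μ : Measure α} {w : ι → α} (hw : Injective w)
    (h : ∀ᵐ x ∂μ, x ∈ range w) : μ = ∑ i, μ {w i} • dirac (w i) := by
  have hdisj : Pairwise (Disjoint on fun i => ({w i} : Set α)) := fun i j hij =>
    disjoint_singleton.2 (hw.ne hij)
  calc μ = μ.restrict (⋃ i, {w i}) := by
        rw [iUnion_singleton_eq_range, restrict_eq_self_of_ae_mem h]
    _ = ∑ i, μ {w i} • dirac (w i) := by
        simp only [restrict_iUnion hdisj fun i => measurableSet_singleton (w i), sum_fintype,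
          restrict_singleton]

variable {E : Type*} [NormedAddCommGroup E]

theorem integrable_sum_smul_dirac {c : ι → ENNReal} (hc : ∀ i, c i ≠ ⊤) (x : ι → α)
    (f : α → E) : Integrable f (∑ i, c i • dirac (x i)) :=
  integrable_finsetSum_measure.2 fun i _ =>
    (integrable_dirac enorm_lt_top).smul_measure (hc i)

theorem integral_sum_smul_dirac [NormedSpace ℝ E] [CompleteSpace E] {c : ι → ENNReal}
    (hc : ∀ i, c i ≠ ⊤) (x : ι → α) (f : α → E) :
    ∫ a, f a ∂(∑ i, c i • dirac (x i)) = ∑ i, (c i).toReal • f (x i) := by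
  rw [integral_finsetSum_measure fun i _ =>
    (integrable_dirac enorm_lt_top).smul_measure (hc i)]
  simp only [integral_smul_measure, integral_dirac]

end MeasureTheory.Measure

theorem LinearMap.surjective_of_ker_eq_ker {K M N N' : Type*} [Field K] [AddCommGroup M]
    [Module K M] [AddCommGroup N] [Module K N] [FiniteDimensional K N] [AddCommGroup N']
    [Module K N'] {f : M →ₗ[K] N} {g : M →ₗ[K] N'} (h : ker f = ker g)
    (hg : Module.finrank K (range g) = Module.finrank K N) : Surjective f := by
  have e : range f ≃ₗ[K] range g :=
    (f.quotKerEquivRange.symm.trans (Submodule.quotEquivOfEq _ _ h)).trans g.quotKerEquivRange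
  rw [← range_eq_top]
  exact Submodule.eq_top_of_finrank_eq (e.finrank_eq.trans hg)

theorem LinearMap.ae_forall_apply_eq_zero {K M α : Type*} [Field K] [AddCommGroup M] [Module K M]
    [FiniteDimensional K M] [MeasurableSpace α] {μ : Measure α} (f : M →ₗ[K] α → K)
    (h : ∀ m, ∀ᵐ x ∂μ, f m x = 0) : ∀ᵐ x ∂μ, ∀ m, f m x = 0 := by
  let b := Module.finBasis K M
  filter_upwards [ae_all_iff.2 fun i => h (b i)] with x hx m
  have : (LinearMap.proj x ∘ₗ f : M →ₗ[K] K) = 0 := b.ext fun i => hx i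
  exact LinearMap.congr_fun this m

namespace MvPolynomial

variable {σ R ι : Type*} [CommRing R]

theorem mul_mem_restrictTotalDegree {a b : ℕ} {p q : MvPolynomial σ R}
    (hp : p ∈ restrictTotalDegree σ R a) (hq : q ∈ restrictTotalDegree σ R b) :
    p * q ∈ restrictTotalDegree σ R (a + b) := by
  rw [mem_restrictTotalDegree] at *
  exact (totalDegree_mul p q).trans (add_le_add hp hq)

theorem mul_self_mem_restrictTotalDegree {n : ℕ} (p : restrictTotalDegree σ R n) :
    (p * p : MvPolynomial σ R) ∈ restrictTotalDegree σ R (2 * n) :=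
  two_mul n ▸ mul_mem_restrictTotalDegree p.2 p.2

noncomputable def evalAt_s8 {n : ℕ} (w : ι → σ → R) : restrictTotalDegree σ R n →ₗ[R] ι → R :=
  LinearMap.pi fun i => (aeval (w i)).toLinearMap ∘ₗ (restrictTotalDegree σ R n).subtype

@[simp]
theorem evalAt_apply {n : ℕ} (w : ι → σ → R) (p : restrictTotalDegree σ R n) (i : ι) :
    evalAt_s8 w p i = eval (w i) (p : MvPolynomial σ R) := by
  simp [evalAt_s8]

end MvPolynomial

def IsConsistent {σ : Type*} (Λ : MvPolynomial σ ℝ →ₗ[ℝ] ℝ) (n : ℕ) (V : Set (σ → ℝ)) : Prop :=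
  ∀ p : MvPolynomial σ ℝ, p.totalDegree ≤ 2 * n → (∀ x ∈ V, eval x p = 0) → Λ p = 0

section RieszFunctional

variable {σ ι : Type*} {n : ℕ} {Λ : MvPolynomial σ ℝ →ₗ[ℝ] ℝ}
  {T : LinearMap.BilinForm ℝ (restrictTotalDegree σ ℝ n)} {w : ι → σ → ℝ}

theorem mem_ker_iff_riesz_mul_self_eq_zero
    (hT : ∀ p q : restrictTotalDegree σ ℝ n, T p q = Λ (p * q))
    (hpsd : ∀ p : MvPolynomial σ ℝ, p.totalDegree ≤ n → 0 ≤ Λ (p * p))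
    {p : restrictTotalDegree σ ℝ n} : p ∈ LinearMap.ker T ↔ Λ (p * p) = 0 := by
  have hsymm : LinearMap.IsSymm T := ⟨fun p q => by simp [hT, mul_comm]⟩
  have hnonneg (p : restrictTotalDegree σ ℝ n) : 0 ≤ T p p :=
    hT p p ▸ hpsd _ ((mem_restrictTotalDegree _ _ _).1 p.2)
  rw [← hT, T.apply_apply_same_eq_zero_iff hnonneg hsymm]

theorem mem_ker_of_evalAt_eq_zero
    (hT : ∀ p q : restrictTotalDegree σ ℝ n, T p q = Λ (p * q))
    (hpsd : ∀ p : MvPolynomial σ ℝ, p.totalDegree ≤ n → 0 ≤ Λ (p * p))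
    (hcons : IsConsistent Λ n (range w)) {p : restrictTotalDegree σ ℝ n}
    (hp : evalAt_s8 w p = 0) : p ∈ LinearMap.ker T := by
  rw [mem_ker_iff_riesz_mul_self_eq_zero hT hpsd]
  refine hcons _ ((mem_restrictTotalDegree _ _ _).1 (mul_self_mem_restrictTotalDegree p)) ?_
  rintro _ ⟨i, rfl⟩
  simp [← evalAt_apply, hp]

variable [DecidableEq ι] {q : ι → restrictTotalDegree σ ℝ n}

theorem eval_lagrange (hq : ∀ i, evalAt_s8 w (q i) = Pi.single i 1) (i j : ι) :
    eval (w j) (q i : MvPolynomial σ ℝ) = (Pi.single i 1 : ι → ℝ) j := by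
  rw [← evalAt_apply, hq]

theorem riesz_lagrange_pos
    (hT : ∀ p q : restrictTotalDegree σ ℝ n, T p q = Λ (p * q))
    (hpsd : ∀ p : MvPolynomial σ ℝ, p.totalDegree ≤ n → 0 ≤ Λ (p * p))
    (hvanish : ∀ p, T p = 0 → evalAt_s8 w p = 0) (hq : ∀ i, evalAt_s8 w (q i) = Pi.single i 1) (i : ι) :
    0 < Λ (q i * q i) := by
  refine (hpsd _ ((mem_restrictTotalDegree _ _ _).1 (q i).2)).lt_of_ne fun h => ?_
  have := congrFun (hvanish (q i) ((mem_ker_iff_riesz_mul_self_eq_zero hT hpsd).2 h.symm)) i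
  rw [hq] at this
  simp at this

theorem riesz_eq_sum_lagrange [Fintype ι] (hcons : IsConsistent Λ n (range w))
    (hq : ∀ i, evalAt_s8 w (q i) = Pi.single i 1) {p : MvPolynomial σ ℝ}
    (hp : p.totalDegree ≤ 2 * n) : Λ p = ∑ i, Λ (q i * q i) * eval (w i) p := by
  set g := p - ∑ i, eval (w i) p • (q i * q i : MvPolynomial σ ℝ)
  have hg_deg : g ∈ restrictTotalDegree σ ℝ (2 * n) :=
    sub_mem ((mem_restrictTotalDegree _ _ _).2 hp)
      (sum_mem fun i _ => Submodule.smul_mem _ _ (mul_self_mem_restrictTotalDegree (q i)))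
  have hg_eval : ∀ x ∈ range w, eval x g = 0 := by
    rintro _ ⟨j, rfl⟩
    simp [g, eval_lagrange hq, Pi.single_apply]
  have := hcons g ((mem_restrictTotalDegree _ _ _).1 hg_deg) hg_eval
  simpa [g, sub_eq_zero, mul_comm] using this

end RieszFunctional

namespace IsRepresenting

variable {d n : ℕ} {Λ : MvPolynomial (Fin d) ℝ →ₗ[ℝ] ℝ} {μ : Measure (Fin d → ℝ)}

theorem ae_eval_eq_zero (hμ : IsRepresenting d n Λ μ) {p : MvPolynomial (Fin d) ℝ}
    (hp : p.totalDegree ≤ n) (hp0 : Λ (p * p) = 0) : ∀ᵐ x ∂μ, eval x p = 0 := by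
  obtain ⟨hint, hint_eq⟩ := hμ (p * p) ((totalDegree_mul p p).trans (by omega))
  have hnonneg : 0 ≤ fun x => eval x (p * p) := fun x => by simp [mul_self_nonneg]
  filter_upwards [(integral_eq_zero_iff_of_nonneg hnonneg hint).1 (hint_eq.trans hp0)] with x hx
  simpa using hx

theorem ae_mem_range {r : ℕ} {w : Fin r → Fin d → ℝ} (hμ : IsRepresenting d n Λ μ)
    {T : LinearMap.BilinForm ℝ (restrictTotalDegree (Fin d) ℝ n)}
    (hT : ∀ p q : restrictTotalDegree (Fin d) ℝ n, T p q = Λ (p * q))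
    (hpsd : ∀ p : MvPolynomial (Fin d) ℝ, p.totalDegree ≤ n → 0 ≤ Λ (p * p))
    (hV : range w = {x | ∀ p : restrictTotalDegree (Fin d) ℝ n,
      T p = 0 → eval x (p : MvPolynomial (Fin d) ℝ) = 0}) :
    ∀ᵐ x ∂μ, x ∈ range w := by
  let f : LinearMap.ker T →ₗ[ℝ] (Fin d → ℝ) → ℝ := evalAt_s8 id ∘ₗ (LinearMap.ker T).subtype
  have := LinearMap.ae_forall_apply_eq_zero f fun p : LinearMap.ker T =>
    hμ.ae_eval_eq_zero ((mem_restrictTotalDegree _ _ _).1 p.1.2)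
      ((mem_ker_iff_riesz_mul_self_eq_zero hT hpsd).1 p.2)
  filter_upwards [this] with x hx
  rw [hV]
  exact fun p hp => by simpa [f] using hx ⟨p, hp⟩

theorem measure_singleton {r : ℕ} {w : Fin r → Fin d → ℝ} (hμ : IsRepresenting d n Λ μ)
    (hw : Injective w) (hae : ∀ᵐ x ∂μ, x ∈ range w)
    {q : Fin r → restrictTotalDegree (Fin d) ℝ n} (hq : ∀ i, evalAt_s8 w (q i) = Pi.single i 1)
    {i : Fin r} (hpos : 0 < Λ (q i * q i)) : μ {w i} = ENNReal.ofReal (Λ (q i * q i)) := by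
  have hind : (fun x => eval x (q i * q i : MvPolynomial (Fin d) ℝ))
      =ᵐ[μ] ({w i} : Set (Fin d → ℝ)).indicator 1 := by
    filter_upwards [hae] with x hx
    obtain ⟨j, rfl⟩ := hx
    by_cases h : j = i
    · subst h; simp [eval_lagrange hq]
    · simp [eval_lagrange hq, h, hw.ne h]
  have hreal : μ.real {w i} = Λ (q i * q i) := by
    rw [← integral_indicator_one (measurableSet_singleton _), ← integral_congr_ae hind,
      (hμ _ ((mem_restrictTotalDegree _ _ _).1 (mul_self_mem_restrictTotalDegree (q i)))).2]
  have hfin : μ {w i} ≠ ⊤ := fun h => hpos.ne' (by simp [← hreal, measureReal_def, h])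
  rw [← hreal, measureReal_def, ENNReal.ofReal_toReal hfin]

end IsRepresenting

/-- Theorem 1.3 ((iii) ⇒ (ii)): an extremal `β^{(2n)}` with `M(n) ⪰ 0` and `β`
consistent has a unique representing measure, namely the `r`-atomic measure
`Σ ρ_k δ_{w_k}` supported on `V`, with all densities positive. -/
theorem stmt8 (d n r : ℕ) (Λ : MvPolynomial (Fin d) ℝ →ₗ[ℝ] ℝ)
    (T : MvPolynomial.restrictTotalDegree (Fin d) ℝ n →ₗ[ℝ]
      (MvPolynomial.restrictTotalDegree (Fin d) ℝ n →ₗ[ℝ] ℝ))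
    (hT : ∀ p q : MvPolynomial.restrictTotalDegree (Fin d) ℝ n,
      T p q = Λ ((p : MvPolynomial (Fin d) ℝ) * (q : MvPolynomial (Fin d) ℝ)))
    (w : Fin r → (Fin d → ℝ)) (hw : Function.Injective w)
    (V : Set (Fin d → ℝ)) (hVw : V = Set.range w)
    (hV : V = {x | ∀ p : MvPolynomial.restrictTotalDegree (Fin d) ℝ n,
      T p = 0 → MvPolynomial.eval x (p : MvPolynomial (Fin d) ℝ) = 0})
    (hrank : Module.finrank ℝ (LinearMap.range T) = r)
    (hpsd : ∀ p : MvPolynomial (Fin d) ℝ, p.totalDegree ≤ n → 0 ≤ Λ (p * p))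
    (hcons : ∀ p : MvPolynomial (Fin d) ℝ, p.totalDegree ≤ 2 * n →
      (∀ x ∈ V, MvPolynomial.eval x p = 0) → Λ p = 0) :
    ∃ ρ : Fin r → ℝ, (∀ k, 0 < ρ k) ∧
      IsRepresenting d n Λ (∑ k, ENNReal.ofReal (ρ k) • Measure.dirac (w k)) ∧
      ∀ μ : Measure (Fin d → ℝ), IsRepresenting d n Λ μ →
        μ = ∑ k, ENNReal.ofReal (ρ k) • Measure.dirac (w k) := by
  subst hVw
  have hvanish : ∀ p, T p = 0 → evalAt_s8 w p = 0 := fun p hp => funext fun i => by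
    have hwi := Set.mem_range_self (f := w) i
    rw [hV] at hwi
    simpa using hwi p hp
  have hker : LinearMap.ker (evalAt_s8 w) = LinearMap.ker T :=
    le_antisymm (fun p => mem_ker_of_evalAt_eq_zero hT hpsd hcons) fun p => hvanish p
  choose q hq using fun i : Fin r =>
    LinearMap.surjective_of_ker_eq_ker hker (by simp [hrank]) (Pi.single i 1)
  have hpos := riesz_lagrange_pos hT hpsd hvanish hq
  refine ⟨fun i => Λ (q i * q i), hpos, fun p hp => ⟨Measure.integrable_sum_smul_dirac
    (fun _ => ENNReal.ofReal_ne_top) w _, ?_⟩, fun μ hμ => ?_⟩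
  · simp [Measure.integral_sum_smul_dirac, riesz_eq_sum_lagrange hcons hq hp,
      ENNReal.toReal_ofReal (hpos _).le]
  · have hae := hμ.ae_mem_range hT hpsd hV
    rw [Measure.eq_sum_smul_dirac_of_ae_mem_range hw hae]
    simp_rw [hμ.measure_singleton hw hae hq (hpos _)]
end

section
/- For 0 < a < 1 and n ≥ 1, the complex polynomial p(z) = z^{2n} + a z^{2n−1} − a z − 1 has exactly 2n distinct zeros, all lying on the unit circle {z ∈ ℂ : |z| = 1}. -/
open Polynomial

/-- Any root of `z^{2m+2} + a z^{2m+1} - a z - 1` has modulus 1. -/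
lemma stmt9_abs (m : ℕ) (a : ℝ) (ha : 0 < a) (ha1 : a < 1) (z : ℂ)
    (hz : z ^ (2*m+2) + (a : ℂ) * z ^ (2*m+1) - (a : ℂ) * z - 1 = 0) :
    ‖z‖ = 1 := by
  set r := ‖z‖ with hr
  have hr0 : 0 ≤ r := norm_nonneg z
  have heq : z ^ (2*m+1) * (z + (a:ℂ)) = (a:ℂ) * z + 1 := by
    linear_combination hz
  have habs : r ^ (2*m+1) * ‖z + (a:ℂ)‖ = ‖(a:ℂ)*z + 1‖ := by
    rw [hr, ← norm_pow, ← norm_mul, heq]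
  have hkey : ‖(a:ℂ)*z + 1‖^2 - ‖z + (a:ℂ)‖^2
      = (1 - a^2) * (1 - r^2) := by
    rw [Complex.sq_norm, Complex.sq_norm, hr, Complex.sq_norm]
    simp [Complex.normSq_apply, Complex.add_re, Complex.add_im, Complex.mul_re,
      Complex.mul_im, Complex.ofReal_re, Complex.ofReal_im]
    ring
  have hX0 : 0 ≤ ‖(a:ℂ)*z + 1‖ := norm_nonneg _
  have hY0 : 0 ≤ ‖z + (a:ℂ)‖ := norm_nonneg _
  rcases lt_trichotomy r 1 with h | h | h
  · exfalso
    have h1 : 1 ≤ ‖(a:ℂ)*z+1‖ + a*r := by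
      have ht := norm_add_le ((a:ℂ)*z+1) (-((a:ℂ)*z))
      rw [norm_neg] at ht
      have he : ((a:ℂ)*z+1) + -((a:ℂ)*z) = 1 := by ring
      rw [he] at ht
      simpa [norm_mul, Complex.norm_real, Real.norm_eq_abs, abs_of_pos ha, ← hr] using ht
    have hpos : 0 < ‖(a:ℂ)*z + 1‖ := by nlinarith
    have hprod : 0 < (1-a^2)*(1-r^2) := mul_pos (by nlinarith) (by nlinarith)
    have hlt : ‖z + (a:ℂ)‖ < ‖(a:ℂ)*z + 1‖ := by
      by_contra hc
      push_neg at hc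
      have h2 := pow_le_pow_left₀ hX0 hc 2
      linarith
    have hzapos : 0 < ‖z + (a:ℂ)‖ := by
      rcases hY0.lt_or_eq with h' | h'
      · exact h'
      · exfalso; rw [← h'] at habs; simp at habs; nlinarith
    have hpow : r ^ (2*m+1) < 1 := pow_lt_one₀ hr0 h (by omega)
    nlinarith
  · exact h
  · exfalso
    have hprod : (1-a^2)*(1-r^2) < 0 :=
      mul_neg_of_pos_of_neg (by nlinarith) (by nlinarith)
    have hlt : ‖(a:ℂ)*z + 1‖ < ‖z + (a:ℂ)‖ := by
      by_contra hc
      push_neg at hc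
      have h2 := pow_le_pow_left₀ hY0 hc 2
      linarith
    have hzapos : 0 < ‖z + (a:ℂ)‖ := by linarith
    have hpow : 1 < r ^ (2*m+1) := one_lt_pow₀ h (by omega)
    nlinarith

/-- For `0 < a < 1` and `n ≥ 1`, the polynomial `z^{2n} + a z^{2n-1} - a z - 1`
has exactly `2n` distinct zeros, all lying on the unit circle. -/
theorem stmt9 (n : ℕ) (hn : 1 ≤ n) (a : ℝ) (ha : 0 < a) (ha1 : a < 1) :
    ∃ S : Finset ℂ, S.card = 2 * n ∧
      (∀ z : ℂ, z ∈ S ↔ z ^ (2 * n) + (a : ℂ) * z ^ (2 * n - 1) - (a : ℂ) * z - 1 = 0) ∧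
      ∀ z ∈ S, ‖z‖ = 1 := by
  obtain ⟨m, rfl⟩ : ∃ m, n = m + 1 := ⟨n - 1, by omega⟩
  have e1 : 2 * (m + 1) = 2*m+2 := by ring
  rw [e1]
  have e2 : 2*m+2 - 1 = 2*m+1 := rfl
  rw [e2]
  set P : Polynomial ℂ := X^(2*m+2) + C (a:ℂ) * X^(2*m+1) - C (a:ℂ) * X - C 1 with hP
  have hev : ∀ z : ℂ, P.eval z = z^(2*m+2) + (a:ℂ)*z^(2*m+1) - (a:ℂ)*z - 1 := by
    intro z; simp [hP]
  have hne : P ≠ 0 := by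
    intro h
    have h0 := hev 0
    rw [h] at h0
    simp at h0
  have hdeg : P.natDegree = 2*m+2 := by
    unfold P
    compute_degree!
    rw [if_neg (by omega : ¬ 2*m+2 = 1)]
    norm_num
  have hder : P.derivative = C ((2*m+2 : ℕ) : ℂ) * X^(2*m+1)
      + C (a:ℂ) * C ((2*m+1:ℕ):ℂ) * X^(2*m) - C (a:ℂ) := by
    simp [hP]
    simp only [map_ofNat]
    ring
  have hsimple : ∀ z : ℂ, P.eval z = 0 → P.derivative.eval z ≠ 0 := by
    intro z hz hz'
    rw [hev] at hz
    have habs : ‖z‖ = 1 := stmt9_abs m a ha ha1 z hz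
    rw [hder] at hz'
    simp at hz'
    push_cast at hz'
    -- derive z^(2m+2) = -(2m*a*z + (2m+1))
    have key : z^(2*m+2) = -(2*(m:ℂ)*(a:ℂ)*z + (2*(m:ℂ)+1)) := by
      have hzmul : (2*(m:ℂ)+2) * z^(2*m+2) + (a:ℂ)*(2*(m:ℂ)+1)*z^(2*m+1) - (a:ℂ)*z = 0 := by
        linear_combination z * hz'
      linear_combination hzmul - (2*(m:ℂ)+1) * hz
    have habs2 : ‖2*(m:ℂ)*(a:ℂ)*z + (2*(m:ℂ)+1)‖ = 1 := by
      have : ‖z^(2*m+2)‖ = 1 := by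
        rw [norm_pow, habs, one_pow]
      rw [key, norm_neg] at this
      exact this
    have hge : (2*(m:ℝ)+1) ≤ 1 + 2*(m:ℝ)*a := by
      have htri := norm_add_le (2*(m:ℂ)*(a:ℂ)*z + (2*(m:ℂ)+1)) (-(2*(m:ℂ)*(a:ℂ)*z))
      rw [norm_neg] at htri
      have he : (2*(m:ℂ)*(a:ℂ)*z + (2*(m:ℂ)+1)) + -(2*(m:ℂ)*(a:ℂ)*z) = ((2*(m:ℂ)+1) : ℂ) := by
        ring
      rw [he] at htri
      rw [habs2] at htri
      have h1 : ‖((2*(m:ℂ)+1) : ℂ)‖ = 2*(m:ℝ)+1 := by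
        rw [show ((2*(m:ℂ)+1) : ℂ) = ((2*(m:ℝ)+1 : ℝ) : ℂ) by push_cast; ring,
          Complex.norm_real, Real.norm_eq_abs]
        exact abs_of_nonneg (by positivity)
      have h2 : ‖2*(m:ℂ)*(a:ℂ)*z‖ = 2*(m:ℝ)*a := by
        rw [show (2*(m:ℂ)*(a:ℂ)*z) = ((2*(m:ℝ)*a : ℝ) : ℂ) * z by push_cast; ring,
          norm_mul, Complex.norm_real, Real.norm_eq_abs, habs]
        rw [abs_of_nonneg (by positivity)]
        ring
      rw [h1, h2] at htri
      exact htri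
    have hm0 : m = 0 := by
      by_contra hm
      have : (1:ℝ) ≤ (m:ℝ) := by exact_mod_cast Nat.one_le_iff_ne_zero.mpr hm
      nlinarith
    subst hm0
    simp at key hz
    -- key : z^2 = -1 ; hz : z^2 + a z - a z - 1 = 0 → z^2 = 1
    have h1 : z^2 = 1 := by linear_combination hz
    rw [h1] at key
    norm_num at key
  classical
  have hnodup : P.roots.Nodup := by
    rw [Multiset.nodup_iff_count_le_one]
    intro z
    rw [Polynomial.count_roots]
    by_contra hcnt
    push_neg at hcnt
    have hdvd : (X - C z)^2 ∣ P :=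
      dvd_trans (pow_dvd_pow _ hcnt) (Polynomial.pow_rootMultiplicity_dvd P z)
    obtain ⟨q, hq⟩ := hdvd
    have hz : P.eval z = 0 := by rw [hq]; simp
    have hz' : P.derivative.eval z = 0 := by
      rw [hq, derivative_mul, derivative_pow]
      simp
    exact hsimple z hz hz'
  have hsplits : P.Splits := IsAlgClosed.splits P
  have hcard : P.roots.card = 2*m+2 := by
    rw [Polynomial.splits_iff_card_roots.mp hsplits, hdeg]
  refine ⟨P.roots.toFinset, ?_, ?_, ?_⟩
  · rw [Multiset.toFinset_card_of_nodup hnodup, hcard]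
  · intro z
    rw [Multiset.mem_toFinset, Polynomial.mem_roots hne, Polynomial.IsRoot, hev]
  · intro z hzS
    rw [Multiset.mem_toFinset, Polynomial.mem_roots hne] at hzS
    have := hzS
    rw [Polynomial.IsRoot, hev] at this
    exact stmt9_abs m a ha ha1 z this
end

section
/- Let d = 2 and let M(3) be a moment matrix of a real planar sequence β^{(6)} satisfying the column relation Y = X³ (i.e., the polynomial y − x³ lies in the kernel of M(3) viewed as polynomials). If the variety V of M(3) has at least 7 points and rank M(3) ≤ 7, then every polynomial p ∈ ℝ[x,y] of total degree at most 3 vanishing identically on V satisfies M(3) p̂ = 0. -/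
/-!
The relation `y = x³` puts every point of `V` on the curve `t ↦ (t, t³)`, so the points of `V` have
distinct `x`-coordinates. Substituting `x ↦ t`, `y ↦ t³` sends a monomial `xⁱyʲ` to `t^(i + 3j)`;
for the seven cubic monomials other than `x³`, `xy²`, `y³` these exponents are distinct and at
most `6`. Hence a cubic vanishing on `V` and having no `x³`, `xy²`, `y³` terms becomes a
polynomial of degree `≤ 6` in `t` with seven roots, so it is zero. The cubics vanishing on `V` thus
form a space of dimension at most `3 = 10 - 7`, while by rank–nullity `ker M(3)`, which they
contain, has dimension at least `10 - rank M(3) ≥ 3`; so the two spaces coincide.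
-/

open MvPolynomial
open scoped Polynomial

namespace Finsupp

theorem sum_id_fin_two (m : Fin 2 →₀ ℕ) : (m.sum fun _ e => e) = m 0 + m 1 := by
  rw [sum_fintype _ _ fun _ => rfl, Fin.sum_univ_two]

theorem weight_one_pow_fin_two (k : ℕ) (m : Fin 2 →₀ ℕ) : weight ![1, k] m = m 0 + k * m 1 := by
  simp [weight_eq_sum, Fin.sum_univ_two, mul_comm]

theorem injOn_weight_one_pow_fin_two (k : ℕ) :
    Set.InjOn (weight ![1, k]) {m : Fin 2 →₀ ℕ | m 0 < k} := by
  intro m hm m' hm' h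
  simp only [Set.mem_ofPred_eq, weight_one_pow_fin_two] at hm hm' h
  have h0 : m 0 = m' 0 := by
    simpa [Nat.add_mul_mod_self_left, Nat.mod_eq_of_lt hm, Nat.mod_eq_of_lt hm'] using
      congrArg (· % k) h
  have h1 : m 1 = m' 1 := by
    rw [h0] at h
    exact Nat.eq_of_mul_eq_mul_left (by omega : 0 < k) (by omega)
  ext i
  fin_cases i
  exacts [h0, h1]

end Finsupp

namespace MvPolynomial

section MonomialSubstitution

variable {σ R : Type*} [CommSemiring R] (a : σ → ℕ)

theorem aeval_X_pow_monomial (m : σ →₀ ℕ) (c : R) :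
    aeval (fun i => (Polynomial.X : R[X]) ^ a i) (monomial m c) =
      Polynomial.C c * Polynomial.X ^ Finsupp.weight a m := by
  rw [aeval_monomial, Polynomial.algebraMap_eq, Finsupp.weight_apply, Finsupp.prod, Finsupp.sum,
    ← Finset.prod_pow_eq_pow_sum]
  simp only [← pow_mul, smul_eq_mul, mul_comm]

theorem coeff_aeval_X_pow_weight {p : MvPolynomial σ R}
    (hinj : Set.InjOn (Finsupp.weight a) (p.support : Set (σ →₀ ℕ)))
    {m : σ →₀ ℕ} (hm : m ∈ p.support) :
    (aeval (fun i => (Polynomial.X : R[X]) ^ a i) p).coeff (Finsupp.weight a m) = coeff m p := by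
  conv_lhs => rw [p.as_sum, map_sum]
  rw [Polynomial.finsetSum_coeff, Finset.sum_eq_single_of_mem m hm]
  · simp [aeval_X_pow_monomial]
  · intro m' hm' hne
    rw [aeval_X_pow_monomial, Polynomial.coeff_C_mul_X_pow, if_neg]
    exact fun h => hne (hinj hm hm' h).symm

theorem eq_zero_of_aeval_X_pow_eq_zero {p : MvPolynomial σ R}
    (hinj : Set.InjOn (Finsupp.weight a) (p.support : Set (σ →₀ ℕ)))
    (h : aeval (fun i => (Polynomial.X : R[X]) ^ a i) p = 0) : p = 0 := by
  ext m
  by_cases hm : m ∈ p.support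
  · rw [← coeff_aeval_X_pow_weight a hinj hm, h, Polynomial.coeff_zero, coeff_zero]
  · exact notMem_support_iff.mp hm

theorem natDegree_aeval_X_pow_le {p : MvPolynomial σ R} {n : ℕ}
    (h : ∀ m ∈ p.support, Finsupp.weight a m ≤ n) :
    (aeval (fun i => (Polynomial.X : R[X]) ^ a i) p).natDegree ≤ n := by
  conv_lhs => rw [p.as_sum, map_sum]
  refine Polynomial.natDegree_sum_le_of_forall_le _ _ fun m hm => ?_
  rw [aeval_X_pow_monomial]
  exact (Polynomial.natDegree_C_mul_X_pow_le _ _).trans (h m hm)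

theorem eval_aeval_X_pow (p : MvPolynomial σ R) (t : R) :
    (aeval (fun i => (Polynomial.X : R[X]) ^ a i) p).eval t = eval (fun i => t ^ a i) p := by
  rw [← Polynomial.coe_aeval_eq_eval, comp_aeval_apply, ← coe_aeval_eq_eval]
  simp

theorem eq_zero_of_eval_pow_eq_zero {R : Type*} [CommRing R] [IsDomain R] {p : MvPolynomial σ R}
    {n : ℕ} (hinj : Set.InjOn (Finsupp.weight a) (p.support : Set (σ →₀ ℕ)))
    (hdeg : ∀ m ∈ p.support, Finsupp.weight a m ≤ n) {S : Finset R} (hS : n < S.card)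
    (h : ∀ t ∈ S, eval (fun i => t ^ a i) p = 0) : p = 0 := by
  refine eq_zero_of_aeval_X_pow_eq_zero a hinj ?_
  refine Polynomial.eq_zero_of_natDegree_lt_card_of_eval_eq_zero' _ S (fun t ht => ?_)
    ((natDegree_aeval_X_pow_le a hdeg).trans_lt hS)
  rw [eval_aeval_X_pow, h t ht]

end MonomialSubstitution

section Cubic

theorem finrank_restrictTotalDegree_fin_two_three {R : Type*} [CommRing R] [Nontrivial R] :
    Module.finrank R (restrictTotalDegree (Fin 2) R 3) = 10 := by
  refine (Module.finrank_eq_nat_card_basis (basisRestrictSupport R _)).trans ?_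
  have e : {m : Fin 2 →₀ ℕ | (m.sum fun _ e => e) ≤ 3} ≃
      ((Finset.range 4 ×ˢ Finset.range 4).filter fun ij => ij.1 + ij.2 ≤ 3 : Finset (ℕ × ℕ)) :=
    Equiv.subtypeEquiv (Finsupp.equivFunOnFinite.trans (finTwoArrowEquiv ℕ)) fun m => by
      simp [Finsupp.sum_id_fin_two]
      omega
  rw [Nat.card_congr e, Nat.card_eq_fintype_card, Fintype.card_coe]
  rfl

variable {R : Type*} [CommSemiring R]

/-- The coefficients of `x³`, `xy²` and `y³`. -/
noncomputable def cubicCoeffs : restrictTotalDegree (Fin 2) R 3 →ₗ[R] Fin 3 → R :=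
  LinearMap.pi fun i => (lcoeff R (![Finsupp.single 0 3, Finsupp.single 0 1 + Finsupp.single 1 2,
    Finsupp.single 1 3] i)).comp (restrictTotalDegree (Fin 2) R 3).subtype

theorem lt_three_and_weight_le_six_of_mem_support {p : restrictTotalDegree (Fin 2) R 3}
    (hp : cubicCoeffs p = 0) {m : Fin 2 →₀ ℕ} (hm : m ∈ (p : MvPolynomial (Fin 2) R).support) :
    m 0 < 3 ∧ Finsupp.weight ![1, 3] m ≤ 6 := by
  have hdeg : m 0 + m 1 ≤ 3 := Finsupp.sum_id_fin_two m ▸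
    (le_totalDegree hm).trans ((mem_restrictTotalDegree _ _ _).mp p.2)
  have hne : ∀ i, m ≠ ![Finsupp.single 0 3, Finsupp.single 0 1 + Finsupp.single 1 2,
      Finsupp.single 1 3] i := by
    rintro i rfl
    exact mem_support_iff.mp hm (congrFun hp i)
  have h30 := hne 0
  have h12 := hne 1
  have h03 := hne 2
  simp [Finsupp.ext_iff, Fin.forall_fin_two] at h30 h12 h03
  rw [Finsupp.weight_one_pow_fin_two]
  omega

end Cubic

section Vanishing

variable {σ K : Type*} [Field K]

noncomputable def vanishingSubmodule (n : ℕ) (V : Set (σ → K)) :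
    Submodule K (restrictTotalDegree σ K n) :=
  ((vanishingIdeal K V).restrictScalars K).comap (restrictTotalDegree σ K n).subtype

theorem mem_vanishingSubmodule {n : ℕ} {V : Set (σ → K)} {p : restrictTotalDegree σ K n} :
    p ∈ vanishingSubmodule n V ↔ ∀ x ∈ V, eval x (p : MvPolynomial σ K) = 0 := by
  simp [vanishingSubmodule]

theorem finrank_vanishingSubmodule_le_three {V : Set (Fin 2 → K)} (hV : ∀ x ∈ V, x 1 = x 0 ^ 3)
    (hcard : ∃ S : Finset (Fin 2 → K), ↑S ⊆ V ∧ 7 ≤ S.card) :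
    Module.finrank K (vanishingSubmodule 3 V) ≤ 3 := by
  classical
  obtain ⟨S, hSV, hS⟩ := hcard
  have hcurve : ∀ x ∈ V, x = fun i => x 0 ^ (![1, 3] : Fin 2 → ℕ) i := fun x hx => by
    ext i
    fin_cases i
    · simp
    · simpa using hV x hx
  have hSinj : Set.InjOn (fun x : Fin 2 → K => x 0) S := fun x hx y hy hxy => by
    rw [hcurve x (hSV hx), hcurve y (hSV hy)]
    simp only at hxy
    rw [hxy]
  have hinj : Function.Injective (cubicCoeffs.domRestrict (vanishingSubmodule 3 V)) := by
    refine (injective_iff_map_eq_zero _).mpr ?_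
    rintro ⟨p, hpV⟩ hp
    have hp : cubicCoeffs p = 0 := hp
    have hsupp := fun m (hm : m ∈ (p : MvPolynomial (Fin 2) K).support) =>
      lt_three_and_weight_le_six_of_mem_support hp hm
    ext1
    refine Subtype.ext (eq_zero_of_eval_pow_eq_zero ![1, 3]
      ((Finsupp.injOn_weight_one_pow_fin_two 3).mono fun m hm => (hsupp m hm).1)
      (fun m hm => (hsupp m hm).2) (S := S.image fun x => x 0) ?_ ?_)
    · rw [Finset.card_image_of_injOn hSinj]
      omega
    · simp only [Finset.mem_image]
      rintro _ ⟨x, hx, rfl⟩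
      rw [← hcurve x (hSV hx)]
      exact mem_vanishingSubmodule.mp hpV x (hSV hx)
  simpa using LinearMap.finrank_le_finrank_of_injective hinj

end Vanishing

end MvPolynomial

/-- Lemma 5.2-style statement: if the planar moment matrix `M(3)` has `y - x³` in its
kernel, its variety `V` has at least 7 points, and `rank M(3) ≤ 7`, then every
polynomial of degree at most 3 vanishing on `V` lies in the kernel of `M(3)`. -/
theorem stmt10 (Λ : MvPolynomial (Fin 2) ℝ →ₗ[ℝ] ℝ)
    (T : MvPolynomial.restrictTotalDegree (Fin 2) ℝ 3 →ₗ[ℝ]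
      (MvPolynomial.restrictTotalDegree (Fin 2) ℝ 3 →ₗ[ℝ] ℝ))
    (hT : ∀ p q : MvPolynomial.restrictTotalDegree (Fin 2) ℝ 3,
      T p q = Λ ((p : MvPolynomial (Fin 2) ℝ) * (q : MvPolynomial (Fin 2) ℝ)))
    (V : Set (Fin 2 → ℝ))
    (hV : V = {x | ∀ p : MvPolynomial.restrictTotalDegree (Fin 2) ℝ 3,
      T p = 0 → MvPolynomial.eval x (p : MvPolynomial (Fin 2) ℝ) = 0})
    (hker : ∀ q : MvPolynomial (Fin 2) ℝ, q.totalDegree ≤ 3 →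
      Λ ((MvPolynomial.X 1 - MvPolynomial.X 0 ^ 3) * q) = 0)
    (hcard : ∃ S : Finset (Fin 2 → ℝ), ↑S ⊆ V ∧ 7 ≤ S.card)
    (hrank : Module.finrank ℝ (LinearMap.range T) ≤ 7) :
    ∀ p : MvPolynomial.restrictTotalDegree (Fin 2) ℝ 3,
      (∀ x ∈ V, MvPolynomial.eval x (p : MvPolynomial (Fin 2) ℝ) = 0) → T p = 0 := by
  have hVzero : ∀ x ∈ V, ∀ p : restrictTotalDegree (Fin 2) ℝ 3, T p = 0 →
      eval x (p : MvPolynomial (Fin 2) ℝ) = 0 := by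
    rw [hV]
    exact fun x hx => hx
  have hq : X 1 - X 0 ^ 3 ∈ restrictTotalDegree (Fin 2) ℝ 3 := by
    rw [mem_restrictTotalDegree]
    refine (totalDegree_sub _ _).trans ?_
    simp [totalDegree_X, totalDegree_X_pow]
  have hTq : T ⟨_, hq⟩ = 0 :=
    LinearMap.ext fun q => (hT _ q).trans (hker _ ((mem_restrictTotalDegree _ _ _).mp q.2))
  have hcurve : ∀ x ∈ V, x 1 = x 0 ^ 3 := fun x hx => by
    simpa [sub_eq_zero] using hVzero x hx _ hTq
  have hkerZ : LinearMap.ker T ≤ vanishingSubmodule 3 V := fun p hp =>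
    mem_vanishingSubmodule.mpr fun x hx => hVzero x hx p hp
  have hZ := finrank_vanishingSubmodule_le_three hcurve hcard
  have hrn := LinearMap.finrank_range_add_finrank_ker T
  rw [finrank_restrictTotalDegree_fin_two_three] at hrn
  have hkerT : LinearMap.ker T = vanishingSubmodule 3 V :=
    Submodule.eq_of_le_of_finrank_le hkerZ (by omega)
  intro p hp
  rw [← LinearMap.mem_ker, hkerT]
  exact mem_vanishingSubmodule.mpr hp
end

section
/- Let d = 2 and suppose the planar moment matrix M(3) satisfies the column relation Y = X³ and rank M(3) ≤ card V = 8, where V is the variety of M(3). Then the map p(X) ↦ p|_V from the column space of M(3) to functions on V is injective; equivalently, every p ∈ P_3 vanishing identically on V satisfies M(3) p̂ = 0. -/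
open MvPolynomial Polynomial

lemma fin2_ext' {d e : Fin 2 → ℝ} (h0 : d 0 = e 0) (h1 : d 1 = e 1) : d = e := by
  funext i
  revert i
  rw [Fin.forall_fin_two]
  exact ⟨h0, h1⟩

lemma subst_coeff (p : MvPolynomial (Fin 2) ℝ) (n : ℕ) :
    (MvPolynomial.aeval ![Polynomial.X, Polynomial.X ^ 3] p).coeff n
      = ∑ d ∈ p.support, if d 0 + 3 * d 1 = n then MvPolynomial.coeff d p else 0 := by
  rw [MvPolynomial.aeval_def, MvPolynomial.eval₂_eq, Polynomial.finset_sum_coeff]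
  refine Finset.sum_congr rfl fun d _ => ?_
  have h2 : (∏ i ∈ d.support, (![Polynomial.X, Polynomial.X ^ 3] : Fin 2 → ℝ[X]) i ^ d i)
      = ∏ i : Fin 2, (![Polynomial.X, Polynomial.X ^ 3] : Fin 2 → ℝ[X]) i ^ d i :=
    Finset.prod_subset (Finset.subset_univ _) (by
      intro i _ hi
      simp [Finsupp.notMem_support_iff.mp hi])
  rw [h2, Fin.prod_univ_two]
  have : (![Polynomial.X, Polynomial.X ^ 3] : Fin 2 → ℝ[X]) 0 ^ d 0 *
      (![Polynomial.X, Polynomial.X ^ 3] : Fin 2 → ℝ[X]) 1 ^ d 1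
      = Polynomial.X ^ (d 0 + 3 * d 1) := by
    simp [← pow_mul, ← pow_add, mul_comm]
  rw [this]
  simp only [Polynomial.algebraMap_eq]; simp only [Polynomial.coeff_C_mul, Polynomial.coeff_X_pow]
  split <;> simp_all [eq_comm]
lemma fin2_ext {d e : Fin 2 →₀ ℕ} (h0 : d 0 = e 0) (h1 : d 1 = e 1) : d = e := by
  ext i
  revert i
  rw [Fin.forall_fin_two]
  exact ⟨h0, h1⟩

lemma fin2_sum (d : Fin 2 →₀ ℕ) : (d.sum fun _ e => e) = d 0 + d 1 := by
  rw [Finsupp.sum_fintype _ _ (fun _ => rfl), Fin.sum_univ_two]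

lemma single03 {d : Fin 2 →₀ ℕ} (h0 : d 0 = 3) (h1 : d 1 = 0) :
    d = Finsupp.single 0 3 := fin2_ext (by simp [h0]) (by simp [h1])

lemma single13 {d : Fin 2 →₀ ℕ} (h0 : d 0 = 0) (h1 : d 1 = 3) :
    d = Finsupp.single 1 3 := fin2_ext (by simp [h0]) (by simp [h1])

lemma support_bound {p : MvPolynomial (Fin 2) ℝ} (hdeg : p.totalDegree ≤ 3)
    {d : Fin 2 →₀ ℕ} (hd : d ∈ p.support) : d 0 + d 1 ≤ 3 := by
  have := MvPolynomial.le_totalDegree hd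
  rw [fin2_sum] at this
  omega

lemma keyA (p : MvPolynomial (Fin 2) ℝ) (hdeg : p.totalDegree ≤ 3)
    (h30 : MvPolynomial.coeff (Finsupp.single 0 3) p = 0)
    (h03 : MvPolynomial.coeff (Finsupp.single 1 3) p = 0)
    (S : Finset ℝ) (hS : 8 ≤ S.card)
    (hz : ∀ x ∈ S, MvPolynomial.eval ![x, x ^ 3] p = 0) : p = 0 := by
  set q : ℝ[X] := MvPolynomial.aeval ![Polynomial.X, Polynomial.X ^ 3] p with hq
  -- facts about support exponents
  have hsupp : ∀ d ∈ p.support, d 0 + d 1 ≤ 3 ∧ ¬(d 0 = 3 ∧ d 1 = 0) ∧ ¬(d 0 = 0 ∧ d 1 = 3) := by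
    intro d hd
    refine ⟨support_bound hdeg hd, fun ⟨a, b⟩ => ?_, fun ⟨a, b⟩ => ?_⟩
    · exact (MvPolynomial.mem_support_iff.mp hd) (by rw [single03 a b]; exact h30)
    · exact (MvPolynomial.mem_support_iff.mp hd) (by rw [single13 a b]; exact h03)
  -- q has natDegree ≤ 7
  have hdegq : q.natDegree ≤ 7 := by
    rw [Polynomial.natDegree_le_iff_coeff_eq_zero]
    intro n hn
    rw [hq, subst_coeff]
    refine Finset.sum_eq_zero fun d hd => ?_
    obtain ⟨hb, hc, he⟩ := hsupp d hd
    have : ¬ (d 0 + 3 * d 1 = n) := by omega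
    simp [this]
  -- q evaluates
  have heval : ∀ x ∈ S, q.eval x = 0 := by
    intro x hx
    have : q.eval x = MvPolynomial.eval ![x, x ^ 3] p := by
      rw [hq, ← Polynomial.coe_aeval_eq_eval]
      have h1 := AlgHom.congr_fun (MvPolynomial.comp_aeval (f := ![Polynomial.X, Polynomial.X ^ 3]) (φ := Polynomial.aeval x)) p
      rw [AlgHom.comp_apply] at h1
      rw [h1]
      rw [show (fun i => Polynomial.aeval x ((![Polynomial.X, Polynomial.X ^ 3] : Fin 2 → ℝ[X]) i)) = ![x, x ^ 3] by
        funext i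
        revert i; rw [Fin.forall_fin_two]; constructor <;> simp]
      rw [MvPolynomial.aeval_def, Algebra.algebraMap_self]
      rfl
    rw [this]; exact hz x hx
  have hq0 : q = 0 := Polynomial.eq_zero_of_natDegree_lt_card_of_eval_eq_zero' q S heval (by omega)
  -- conclude p = 0
  ext d
  by_cases hd : d ∈ p.support
  · obtain ⟨hb, hc, he⟩ := hsupp d hd
    have h := subst_coeff p (d 0 + 3 * d 1)
    rw [← hq, hq0] at h
    simp only [Polynomial.coeff_zero] at h
    rw [Finset.sum_eq_single d (fun e hes hne => ?_) (fun h' => absurd hd h')] at h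
    · simpa using h.symm
    · obtain ⟨eb, ec, ee⟩ := hsupp e hes
      have : ¬ (e 0 + 3 * e 1 = d 0 + 3 * d 1) := by
        intro hEq
        exact hne (fin2_ext (by omega) (by omega))
      simp [this]
  · simpa using MvPolynomial.notMem_support_iff.mp hd


def pr : Fin 10 → ℕ × ℕ :=
  ![(0,0),(1,0),(2,0),(3,0),(0,1),(1,1),(2,1),(0,2),(1,2),(0,3)]

noncomputable def msf (i : Fin 10) : Fin 2 →₀ ℕ :=
  Finsupp.single 0 (pr i).1 + Finsupp.single 1 (pr i).2

lemma msf0 (i : Fin 10) : msf i 0 = (pr i).1 := by simp [msf]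
lemma msf1 (i : Fin 10) : msf i 1 = (pr i).2 := by simp [msf]

lemma msf_inj : Function.Injective msf := by
  intro i j h
  have h0 : (pr i).1 = (pr j).1 := by rw [← msf0, ← msf0, h]
  have h1 : (pr i).2 = (pr j).2 := by rw [← msf1, ← msf1, h]
  have hp : pr i = pr j := Prod.ext h0 h1
  clear h h0 h1
  revert hp
  revert i j
  decide

lemma msf_mem (i : Fin 10) : msf i ∈ {n : Fin 2 →₀ ℕ | (n.sum fun _ e => e) ≤ 3} := by
  show (msf i).sum (fun _ e => e) ≤ 3
  rw [fin2_sum, msf0, msf1]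
  revert i; decide

lemma ten_le_finrank : 10 ≤ Module.finrank ℝ (MvPolynomial.restrictTotalDegree (Fin 2) ℝ 3) := by
  have b : Module.Basis {n : Fin 2 →₀ ℕ | (n.sum fun _ e => e) ≤ 3} ℝ (MvPolynomial.restrictTotalDegree (Fin 2) ℝ 3) :=
    MvPolynomial.basisRestrictSupport ℝ {n : Fin 2 →₀ ℕ | (n.sum fun _ e => e) ≤ 3}
  have li := b.linearIndependent.comp (fun i : Fin 10 => (⟨msf i, msf_mem i⟩ : _))
    (fun i j h => msf_inj (congrArg Subtype.val h))
  have := li.fintype_card_le_finrank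
  simpa using this

set_option synthInstance.maxHeartbeats 1000000 in
set_option maxHeartbeats 1000000 in
/-- Lemma 6.4: if the planar moment matrix `M(3)` has `y - x³` in its kernel and
`rank M(3) ≤ card V = 8`, then every polynomial of degree at most 3 vanishing on the
variety `V` lies in the kernel of `M(3)` (i.e. `φ_β` is injective). -/
theorem stmt11 (Λ : MvPolynomial (Fin 2) ℝ →ₗ[ℝ] ℝ)
    (T : MvPolynomial.restrictTotalDegree (Fin 2) ℝ 3 →ₗ[ℝ]
      (MvPolynomial.restrictTotalDegree (Fin 2) ℝ 3 →ₗ[ℝ] ℝ))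
    (hT : ∀ p q : MvPolynomial.restrictTotalDegree (Fin 2) ℝ 3,
      T p q = Λ ((p : MvPolynomial (Fin 2) ℝ) * (q : MvPolynomial (Fin 2) ℝ)))
    (V : Set (Fin 2 → ℝ))
    (hV : V = {x | ∀ p : MvPolynomial.restrictTotalDegree (Fin 2) ℝ 3,
      T p = 0 → MvPolynomial.eval x (p : MvPolynomial (Fin 2) ℝ) = 0})
    (hker : ∀ q : MvPolynomial (Fin 2) ℝ, q.totalDegree ≤ 3 →
      Λ ((MvPolynomial.X 1 - MvPolynomial.X 0 ^ 3) * q) = 0)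
    (hfin : V.Finite) (hcard : V.ncard = 8)
    (hrank : Module.finrank ℝ (LinearMap.range T) ≤ 8) :
    ∀ p : MvPolynomial.restrictTotalDegree (Fin 2) ℝ 3,
      (∀ x ∈ V, MvPolynomial.eval x (p : MvPolynomial (Fin 2) ℝ) = 0) → T p = 0 := by
  intro p hp
  -- g = y - x³ lies in P₃ and in ker T
  have hgdeg : (MvPolynomial.X 1 - MvPolynomial.X 0 ^ 3 : MvPolynomial (Fin 2) ℝ).totalDegree ≤ 3 := by
    refine le_trans (MvPolynomial.totalDegree_sub _ _) ?_
    simp [MvPolynomial.totalDegree_X, MvPolynomial.totalDegree_X_pow]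
  set g : MvPolynomial.restrictTotalDegree (Fin 2) ℝ 3 :=
    ⟨MvPolynomial.X 1 - MvPolynomial.X 0 ^ 3,
      (MvPolynomial.mem_restrictTotalDegree _ _ _).mpr hgdeg⟩ with hgdef
  have hgT : T g = 0 := by
    apply LinearMap.ext
    intro q
    rw [hT]
    simp only [LinearMap.zero_apply]
    exact hker q ((MvPolynomial.mem_restrictTotalDegree _ _ _).mp q.2)
  -- every point of V lies on the graph y = x³
  have hgraph : ∀ v ∈ V, v 1 = v 0 ^ 3 := by
    intro v hv
    have := (hV ▸ hv) g hgT
    simp only [hgdef] at this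
    simp only [map_sub, MvPolynomial.eval_X, map_pow] at this
    linarith
  -- the x-coordinates of V, a finset of cardinality 8
  have hinj : Set.InjOn (fun v : Fin 2 → ℝ => v 0) V := by
    intro v hv w hw h
    simp only at h
    exact fin2_ext' h (by rw [hgraph v hv, hgraph w hw, h])
  set S : Finset ℝ := hfin.toFinset.image (fun v => v 0) with hSdef
  have hScard : S.card = 8 := by
    rw [hSdef, Finset.card_image_of_injOn (by rwa [Set.Finite.coe_toFinset]),
      ← Set.ncard_eq_toFinset_card _ hfin, hcard]
  -- the submodule Z of polynomials vanishing on V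
  set Z : Submodule ℝ (MvPolynomial.restrictTotalDegree (Fin 2) ℝ 3) :=
    { carrier := {q : MvPolynomial.restrictTotalDegree (Fin 2) ℝ 3 |
        ∀ v ∈ V, MvPolynomial.eval v (q : MvPolynomial (Fin 2) ℝ) = 0}
      add_mem' := by
        intro a b ha hb v hv
        push_cast
        simp [ha v hv, hb v hv]
      zero_mem' := by intro v hv; simp
      smul_mem' := by
        intro c a ha v hv
        push_cast
        simp [ha v hv] } with hZdef
  have hpZ : p ∈ Z := hp
  have hKZ : LinearMap.ker T ≤ Z := by
    intro q hq v hv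
    exact (hV ▸ hv) q (LinearMap.mem_ker.mp hq)
  -- Z injects into ℝ² via the coefficients of x³ and y³
  let L : Z →ₗ[ℝ] ℝ × ℝ := LinearMap.prod
    ((MvPolynomial.lcoeff ℝ (Finsupp.single 0 3)).comp
      ((MvPolynomial.restrictTotalDegree (Fin 2) ℝ 3).subtype.comp Z.subtype))
    ((MvPolynomial.lcoeff ℝ (Finsupp.single 1 3)).comp
      ((MvPolynomial.restrictTotalDegree (Fin 2) ℝ 3).subtype.comp Z.subtype))
  have hL0 : ∀ q : Z, MvPolynomial.coeff (Finsupp.single 0 3) ((q : _) : MvPolynomial (Fin 2) ℝ) = 0 →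
      MvPolynomial.coeff (Finsupp.single 1 3) ((q : _) : MvPolynomial (Fin 2) ℝ) = 0 → q = 0 := by
    intro q h30 h03
    have hz : ∀ x ∈ S, MvPolynomial.eval ![x, x ^ 3] ((q : _) : MvPolynomial (Fin 2) ℝ) = 0 := by
      intro x hx
      rw [hSdef, Finset.mem_image] at hx
      obtain ⟨v, hv, rfl⟩ := hx
      rw [Set.Finite.mem_toFinset] at hv
      have hveq : ![v 0, v 0 ^ 3] = v :=
        fin2_ext' (by simp) (by simp [hgraph v hv])
      rw [hveq]
      exact q.2 v hv
    have hq0 : ((q : _) : MvPolynomial (Fin 2) ℝ) = 0 :=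
      keyA _ ((MvPolynomial.mem_restrictTotalDegree _ _ _).mp (q : MvPolynomial.restrictTotalDegree (Fin 2) ℝ 3).2) h30 h03 S
        (by omega) hz
    exact Subtype.ext (Subtype.ext hq0)
  have hLinj : Function.Injective L := by
    intro a b hab
    have h1 : MvPolynomial.coeff (Finsupp.single 0 3) ((a : _) : MvPolynomial (Fin 2) ℝ)
        = MvPolynomial.coeff (Finsupp.single 0 3) ((b : _) : MvPolynomial (Fin 2) ℝ) :=
      congrArg Prod.fst hab
    have h2 : MvPolynomial.coeff (Finsupp.single 1 3) ((a : _) : MvPolynomial (Fin 2) ℝ)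
        = MvPolynomial.coeff (Finsupp.single 1 3) ((b : _) : MvPolynomial (Fin 2) ℝ) :=
      congrArg Prod.snd hab
    have hsub : a - b = 0 := by
      apply hL0 (a - b) <;> push_cast <;> simp [h1, h2]
    rw [← sub_eq_zero]
    exact hsub
  have hZ2 : Module.finrank ℝ Z ≤ 2 := by
    have := LinearMap.finrank_le_finrank_of_injective hLinj
    simpa using this
  -- rank–nullity
  have hrn := LinearMap.finrank_range_add_finrank_ker T
  have h10 := ten_le_finrank
  have hKfr : Module.finrank ℝ Z ≤ Module.finrank ℝ (LinearMap.ker T) := by omega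
  have hKZeq : LinearMap.ker T = Z := Submodule.eq_of_le_of_finrank_le hKZ hKfr
  exact LinearMap.mem_ker.mp (hKZeq ▸ hpZ)
end

section
/- Let β^{(2n)} be extremal with variety V = {w_1,...,w_r} (r = rank M(n) = card V), let B = {p_1(X),...,p_r(X)} be a column-space basis of M(n) with V_B = (p_i(w_j)) invertible, and define μ_B := Σ ρ_k δ_{w_k} via (ρ_1,...,ρ_r)^T = V_B^{-1}(Λ_β(p_1),...,Λ_β(p_r))^T. If ν is any representing measure for β, then ν = μ_B. -/
open MvPolynomial MeasureTheory

set_option maxHeartbeats 1000000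
set_option synthInstance.maxHeartbeats 400000

/-- Uniqueness in the extremal case: with `V = {w₁,…,w_r}`, a column-space basis
`B = {p₁(X),…,p_r(X)}` with `V_B = (pᵢ(w_j))` invertible, and densities `ρ` solving
`V_B ρ = (Λ(p₁),…,Λ(p_r))ᵀ`, any representing measure `ν` for `β` equals
`μ_B = Σ ρ_k δ_{w_k}`. -/
theorem stmt19 (d n r : ℕ) (Λ : MvPolynomial (Fin d) ℝ →ₗ[ℝ] ℝ)
    (T : MvPolynomial.restrictTotalDegree (Fin d) ℝ n →ₗ[ℝ]
      (MvPolynomial.restrictTotalDegree (Fin d) ℝ n →ₗ[ℝ] ℝ))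
    (hT : ∀ p q : MvPolynomial.restrictTotalDegree (Fin d) ℝ n,
      T p q = Λ ((p : MvPolynomial (Fin d) ℝ) * (q : MvPolynomial (Fin d) ℝ)))
    (w : Fin r → (Fin d → ℝ)) (hw : Function.Injective w)
    (V : Set (Fin d → ℝ)) (hVw : V = Set.range w)
    (hV : V = {x | ∀ p : MvPolynomial.restrictTotalDegree (Fin d) ℝ n,
      T p = 0 → MvPolynomial.eval x (p : MvPolynomial (Fin d) ℝ) = 0})
    (hrank : Module.finrank ℝ (LinearMap.range T) = r)
    (p : Fin r → MvPolynomial.restrictTotalDegree (Fin d) ℝ n)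
    (hbasis : LinearIndependent ℝ (fun i => T (p i)) ∧
      Submodule.span ℝ (Set.range fun i => T (p i)) = LinearMap.range T)
    (hdet : (Matrix.of fun i j =>
      MvPolynomial.eval (w j) ((p i : MvPolynomial (Fin d) ℝ))).det ≠ 0)
    (ρ : Fin r → ℝ)
    (hρ : ∀ i, ∑ j, MvPolynomial.eval (w j) ((p i : MvPolynomial (Fin d) ℝ)) * ρ j =
      Λ (p i : MvPolynomial (Fin d) ℝ))
    (ν : Measure (Fin d → ℝ)) (hν : IsRepresenting d n Λ ν) :
    ν = ∑ k, ENNReal.ofReal (ρ k) • Measure.dirac (w k) := by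
  classical
  -- ν is a finite measure
  have hfin : IsFiniteMeasure ν := by
    have h1 := (hν 1 (by simp)).1
    simp only [map_one] at h1
    rcases integrable_const_iff.mp h1 with h | h
    · norm_num at h
    · exact h
  -- kernel elements vanish ν-a.e.
  have hker : ∀ q : MvPolynomial.restrictTotalDegree (Fin d) ℝ n, T q = 0 →
      ν {x | MvPolynomial.eval x (q : MvPolynomial (Fin d) ℝ) ≠ 0} = 0 := by
    intro q hq
    have hdq := (MvPolynomial.mem_restrictTotalDegree (Fin d) n
      (q : MvPolynomial (Fin d) ℝ)).mp q.2
    have hdeg : ((q : MvPolynomial (Fin d) ℝ) * (q : MvPolynomial (Fin d) ℝ)).totalDegree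
        ≤ 2 * n := by
      calc ((q : MvPolynomial (Fin d) ℝ) * (q : MvPolynomial (Fin d) ℝ)).totalDegree
          ≤ (q : MvPolynomial (Fin d) ℝ).totalDegree
            + (q : MvPolynomial (Fin d) ℝ).totalDegree := totalDegree_mul _ _
        _ ≤ 2 * n := by omega
    obtain ⟨hint, heq⟩ := hν _ hdeg
    have hzero : (∫ x, MvPolynomial.eval x
        ((q : MvPolynomial (Fin d) ℝ) * (q : MvPolynomial (Fin d) ℝ)) ∂ν) = 0 := by
      rw [heq, ← hT q q, hq]; rfl
    have hnn : (0 : (Fin d → ℝ) → ℝ) ≤ fun x => MvPolynomial.eval x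
        ((q : MvPolynomial (Fin d) ℝ) * (q : MvPolynomial (Fin d) ℝ)) := by
      intro x; simp only [map_mul, Pi.zero_apply]; exact mul_self_nonneg _
    have hae := (integral_eq_zero_iff_of_nonneg hnn hint).mp hzero
    have hnull : ν {x | MvPolynomial.eval x
        ((q : MvPolynomial (Fin d) ℝ) * (q : MvPolynomial (Fin d) ℝ)) ≠ 0} = 0 := by
      simpa [Filter.EventuallyEq, ae_iff] using hae
    refine measure_mono_null ?_ hnull
    intro x hx
    simp only [Set.mem_setOf_eq, map_mul] at hx ⊢
    exact mul_ne_zero hx hx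
  -- ν vanishes outside V
  have hVc : ν Vᶜ = 0 := by
    haveI hKfin : Module.Finite ℝ (LinearMap.ker T) := inferInstance
    haveI hKfree : Module.Free ℝ (LinearMap.ker T) := Module.Free.of_divisionRing ℝ (LinearMap.ker T)
    let b := Module.finBasis ℝ (LinearMap.ker T)
    have hsub : Vᶜ ⊆ ⋃ j, {x | MvPolynomial.eval x
        (((b j : LinearMap.ker T) : MvPolynomial.restrictTotalDegree (Fin d) ℝ n) :
          MvPolynomial (Fin d) ℝ) ≠ 0} := by
      intro x hx
      by_contra hc
      simp only [Set.mem_iUnion, Set.mem_setOf_eq, not_exists, not_not] at hc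
      apply hx
      rw [hV]
      intro q hq
      let E : MvPolynomial.restrictTotalDegree (Fin d) ℝ n →ₗ[ℝ] ℝ :=
        { toFun := fun z => MvPolynomial.eval x (z : MvPolynomial (Fin d) ℝ),
          map_add' := fun a b => by simp,
          map_smul' := fun c a => by simp [smul_eq_mul] }
      have hqK : q ∈ LinearMap.ker T := LinearMap.mem_ker.mpr hq
      have hrep := b.sum_repr ⟨q, hqK⟩
      have hqsum : q = ∑ j, b.repr ⟨q, hqK⟩ j •
          ((b j : LinearMap.ker T) : MvPolynomial.restrictTotalDegree (Fin d) ℝ n) := by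
        have := congrArg (Submodule.subtype (LinearMap.ker T)) hrep
        rw [map_sum] at this
        simp only [map_smul, Submodule.subtype_apply] at this
        exact this.symm
      calc MvPolynomial.eval x (q : MvPolynomial (Fin d) ℝ) = E q := rfl
        _ = 0 := by
            rw [hqsum, map_sum]
            refine Finset.sum_eq_zero fun j _ => ?_
            rw [E.map_smul]
            have hz : E ((b j : LinearMap.ker T) :
                MvPolynomial.restrictTotalDegree (Fin d) ℝ n) = 0 := hc j
            rw [hz, smul_zero]
    refine measure_mono_null hsub (measure_iUnion_null fun j => ?_)
    exact hker _ (LinearMap.mem_ker.mp (b j).2)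
  have hwc : ν (Set.range w)ᶜ = 0 := by rw [← hVw]; exact hVc
  -- ν is the sum of point masses at the w k
  have hsum : ν = ∑ k, ν {w k} • Measure.dirac (w k) := by
    ext s hs
    have hrng : MeasurableSet (Set.range w) := (Set.finite_range w).measurableSet
    have h1 : ν s = ν (s ∩ Set.range w) := by
      have h0 := measure_inter_add_diff s hrng (μ := ν)
      have h2 : ν (s \ Set.range w) = 0 :=
        measure_mono_null (fun x hx => hx.2) hwc
      rw [← h0, h2, add_zero]
    rw [h1]
    have hiU : s ∩ Set.range w = ⋃ k, s ∩ {w k} := by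
      ext x
      simp only [Set.mem_inter_iff, Set.mem_range, Set.mem_iUnion, Set.mem_singleton_iff]
      constructor
      · rintro ⟨hxs, k, hk⟩; exact ⟨k, hxs, hk.symm⟩
      · rintro ⟨k, hxs, hk⟩; exact ⟨hxs, k, hk.symm⟩
    rw [hiU, measure_iUnion ?hd ?hm]
    case hd =>
      intro i j hij
      simp only [Function.onFun, Set.disjoint_left]
      rintro x ⟨-, hx1⟩ ⟨-, hx2⟩
      rw [Set.mem_singleton_iff] at hx1 hx2
      exact hij (hw (hx1 ▸ hx2 ▸ rfl))
    case hm =>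
      exact fun k => hs.inter (measurableSet_singleton _)
    rw [tsum_fintype]
    rw [Measure.finset_sum_apply]
    refine Finset.sum_congr rfl fun k _ => ?_
    rw [Measure.smul_apply, Measure.dirac_apply' _ hs, smul_eq_mul]
    by_cases hk : w k ∈ s
    · rw [Set.inter_eq_self_of_subset_right (Set.singleton_subset_iff.mpr hk)]
      simp [Set.indicator_of_mem hk]
    · rw [Set.inter_singleton_eq_empty.mpr hk]
      simp [Set.indicator_of_notMem hk, hk]
  -- the Riesz functional is given by the point masses
  have hΛ : ∀ q : MvPolynomial (Fin d) ℝ, q.totalDegree ≤ 2 * n →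
      Λ q = ∑ k, (ν {w k}).toReal * MvPolynomial.eval (w k) q := by
    intro q hq
    obtain ⟨hint, heq⟩ := hν q hq
    have hI : ∀ k : Fin r, Integrable (fun x => MvPolynomial.eval x q)
        (ν {w k} • Measure.dirac (w k)) := by
      intro k
      refine Integrable.smul_measure ?_ (measure_ne_top ν _)
      exact (integrable_const (MvPolynomial.eval (w k) q)).congr
        (by simp [Filter.EventuallyEq, ae_dirac_eq])
    calc Λ q = ∫ x, MvPolynomial.eval x q ∂ν := heq.symm
      _ = ∫ x, MvPolynomial.eval x q ∂(∑ k, ν {w k} • Measure.dirac (w k)) := by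
          rw [← hsum]
      _ = ∑ k, ∫ x, MvPolynomial.eval x q ∂(ν {w k} • Measure.dirac (w k)) :=
          integral_finset_sum_measure (fun k _ => hI k)
      _ = ∑ k, (ν {w k}).toReal * MvPolynomial.eval (w k) q := by
          refine Finset.sum_congr rfl fun k _ => ?_
          rw [integral_smul_measure, integral_dirac, smul_eq_mul]
  -- weights agree
  set M := Matrix.of (fun i j =>
    MvPolynomial.eval (w j) ((p i : MvPolynomial (Fin d) ℝ))) with hMdef
  set σ : Fin r → ℝ := fun k => (ν {w k}).toReal with hσdef
  have hMv : M.mulVec σ = M.mulVec ρ := by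
    funext i
    have hdi : ((p i : MvPolynomial (Fin d) ℝ)).totalDegree ≤ 2 * n := by
      have := (MvPolynomial.mem_restrictTotalDegree (Fin d) n
        ((p i : MvPolynomial (Fin d) ℝ))).mp (p i).2
      omega
    have h1 := hΛ _ hdi
    have h2 := hρ i
    simp only [Matrix.mulVec, dotProduct, Matrix.of_apply, hMdef]
    calc ∑ j, MvPolynomial.eval (w j) ((p i : MvPolynomial (Fin d) ℝ)) * σ j
        = ∑ j, σ j * MvPolynomial.eval (w j) ((p i : MvPolynomial (Fin d) ℝ)) := by
          simp [mul_comm]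
      _ = Λ ((p i : MvPolynomial (Fin d) ℝ)) := h1.symm
      _ = ∑ j, MvPolynomial.eval (w j) ((p i : MvPolynomial (Fin d) ℝ)) * ρ j := h2.symm
  haveI : Invertible M := M.invertibleOfIsUnitDet (isUnit_iff_ne_zero.mpr hdet)
  have hσρ : σ = ρ := M.mulVec_injective_of_invertible hMv
  rw [hsum]
  refine Finset.sum_congr rfl fun k _ => ?_
  congr 1
  have hρk : ρ k = σ k := by rw [hσρ]
  rw [hρk, hσdef]
  exact (ENNReal.ofReal_toReal (measure_ne_top ν _)).symm
end
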